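/- arXiv:hep-th/9407145 — 9 statements merged into one kernel-verified Lean document; each statement's English description precedes it below -/
import Mathlib

section
/- Let P be a right A-comodule algebra with coaction Δ_R, χ(u⊗v) = u v⁽¹⁾ ⊗ v⁽²⁾, and ν : P ⊗ A → A ⊗ P ⊗ A defined by ν(u ⊗ a) = u⁽²⁾ S(a₁) ⊗ u⁽¹⁾ ⊗ a₂. Then (id ⊗ χ) ∘ (σ_{PA} ∘ Δ_R ⊗ id) = ν ∘ χ, where σ_{PA} : P ⊗ A → A ⊗ P is the twist map. -/
open TensorProduct

set_option maxHeartbeats 1000000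
set_option synthInstance.maxHeartbeats 400000
noncomputable section

variable (k : Type*) [Field k]

/-- Convolution product of linear maps from a coalgebra to an algebra:
`(f * g)(a) = f(a₁) g(a₂)`. -/
def conv {C B : Type*} [AddCommMonoid C] [Module k C] [Coalgebra k C]
    [Semiring B] [Algebra k B] (f g : C →ₗ[k] B) : C →ₗ[k] B :=
  LinearMap.mul' k B ∘ₗ TensorProduct.map f g ∘ₗ Coalgebra.comul

/-- The convolution unit `a ↦ ε(a) 1`. -/
def convOne {C B : Type*} [AddCommMonoid C] [Module k C] [Coalgebra k C]
    [Semiring B] [Algebra k B] : C →ₗ[k] B :=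
  Algebra.linearMap k B ∘ₗ Coalgebra.counit

variable (A P : Type*) [Ring A] [HopfAlgebra k A] [Ring P] [Algebra k P]

/-- The canonical map `χ : P ⊗ P → P ⊗ A`, `u ⊗ v ↦ u v⁽¹⁾ ⊗ v⁽²⁾`,
i.e. `χ = (mult ⊗ id) ∘ (id ⊗ Δ_R)`. -/
def chiMap (ΔR : P →ₗ[k] P ⊗[k] A) : P ⊗[k] P →ₗ[k] P ⊗[k] A :=
  TensorProduct.map (LinearMap.mul' k P) LinearMap.id ∘ₗ
    (TensorProduct.assoc k P P A).symm.toLinearMap ∘ₗ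
    TensorProduct.map LinearMap.id ΔR

/-- The right adjoint coaction `Ad(a) = a₂ ⊗ S(a₁)a₃`. -/
def adCoaction : A →ₗ[k] A ⊗[k] A :=
  TensorProduct.map LinearMap.id (LinearMap.mul' k A) ∘ₗ
    (TensorProduct.leftComm k A A A).toLinearMap ∘ₗ
    TensorProduct.map (HopfAlgebra.antipode (R := k)) LinearMap.id ∘ₗ
    TensorProduct.map LinearMap.id Coalgebra.comul ∘ₗ Coalgebra.comul

/-- The kernel of `P ⊗ P → P ⊗_B P`: the span of elements `u b ⊗ v - u ⊗ b v`
with `b` a coinvariant (`Δ_R b = b ⊗ 1`), so that `P ⊗_B P = (P ⊗ P) ⧸ relSub`. -/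
def relSub (ΔR : P →ₗ[k] P ⊗[k] A) : Submodule k (P ⊗[k] P) :=
  Submodule.span k {x | ∃ u v b : P, ΔR b = b ⊗ₜ 1 ∧ x = (u * b) ⊗ₜ v - u ⊗ₜ (b * v)}

/-- The image of `B ⊗ B` in `P ⊗ P`, where `B = Pᴬ` is the coinvariant subalgebra. -/
def BBsub (ΔR : P →ₗ[k] P ⊗[k] A) : Submodule k (P ⊗[k] P) :=
  Submodule.span k {x | ∃ b c : P, ΔR b = b ⊗ₜ 1 ∧ ΔR c = c ⊗ₜ 1 ∧ x = b ⊗ₜ c}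

/-- The submodule `P B² P ⊆ P ⊗ P`, where `B² = ker(mult : B ⊗ B → B)`. -/
def PB2P (ΔR : P →ₗ[k] P ⊗[k] A) : Submodule k (P ⊗[k] P) :=
  Submodule.span k {w | ∃ u v : P, ∃ x ∈ BBsub k A P ΔR ⊓ LinearMap.ker (LinearMap.mul' k P),
    w = TensorProduct.map (LinearMap.mulLeft k u) (LinearMap.mulRight k v) x}

/-- The map `ν : P ⊗ A → A ⊗ (P ⊗ A)`, `u ⊗ a ↦ u⁽²⁾S(a₁) ⊗ u⁽¹⁾ ⊗ a₂`. -/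
def nuMap (ΔR : P →ₗ[k] P ⊗[k] A) : P ⊗[k] A →ₗ[k] A ⊗[k] (P ⊗[k] A) :=
  TensorProduct.map (LinearMap.mul' k A) LinearMap.id ∘ₗ
    (TensorProduct.tensorTensorTensorComm k A P A A).toLinearMap ∘ₗ
    TensorProduct.map (TensorProduct.comm k P A).toLinearMap LinearMap.id ∘ₗ
    TensorProduct.map ΔR
      ((HopfAlgebra.antipode (R := k) (A := A)).rTensor A ∘ₗ Coalgebra.comul)

lemma hopf_aux (b : A) :
    (LinearMap.mul' k A).rTensor A
      ((TensorProduct.assoc k A A A).symm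
        ((((HopfAlgebra.antipode (R := k)).rTensor A ∘ₗ Coalgebra.comul).lTensor A)
          (Coalgebra.comul b))) = (1 : A) ⊗ₜ[k] b := by
  rw [LinearMap.lTensor_comp, LinearMap.comp_apply, ← Coalgebra.coassoc_apply]
  have h1 : ((TensorProduct.assoc k A A A).symm.toLinearMap ∘ₗ
      ((HopfAlgebra.antipode (R := k) (A := A)).rTensor A).lTensor A ∘ₗ
      (TensorProduct.assoc k A A A).toLinearMap)
      = ((HopfAlgebra.antipode (R := k) (A := A)).lTensor A).rTensor A := by
    ext x y z
    simp
  have h2 := LinearMap.congr_fun h1 ((Coalgebra.comul (R := k)).rTensor A (Coalgebra.comul b))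
  simp only [LinearMap.comp_apply, LinearEquiv.coe_coe] at h2
  rw [h2, ← LinearMap.comp_apply, ← LinearMap.rTensor_comp, ← LinearMap.comp_apply,
    ← LinearMap.rTensor_comp, LinearMap.comp_assoc, HopfAlgebra.mul_antipode_lTensor_comul,
    LinearMap.rTensor_comp, LinearMap.comp_apply, Coalgebra.rTensor_counit_comul]
  simp

/-- `Bmap (p⊗a ⊗ q⊗b) = a ⊗ (pq ⊗ b)`. -/
def Bmap : (P ⊗[k] A) ⊗[k] (P ⊗[k] A) →ₗ[k] A ⊗[k] (P ⊗[k] A) :=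
  (TensorProduct.leftComm k P A A).toLinearMap ∘ₗ
    TensorProduct.map (LinearMap.mul' k P) LinearMap.id ∘ₗ
    (TensorProduct.tensorTensorTensorComm k P A P A).toLinearMap

/-- `Cmap (x ⊗ (y ⊗ b)) = ν-tail ((x*y) ⊗ (S b₁ ⊗ b₂))`. -/
def Cmap : (P ⊗[k] A) ⊗[k] ((P ⊗[k] A) ⊗[k] A) →ₗ[k] A ⊗[k] (P ⊗[k] A) :=
  TensorProduct.map (LinearMap.mul' k A) LinearMap.id ∘ₗ
    (TensorProduct.tensorTensorTensorComm k A P A A).toLinearMap ∘ₗ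
    TensorProduct.map (TensorProduct.comm k P A).toLinearMap LinearMap.id ∘ₗ
    TensorProduct.map (LinearMap.mul' k (P ⊗[k] A))
      ((HopfAlgebra.antipode (R := k) (A := A)).rTensor A ∘ₗ Coalgebra.comul) ∘ₗ
    (TensorProduct.assoc k (P ⊗[k] A) (P ⊗[k] A) A).symm.toLinearMap


/-- Lemma 3.3(1): `(id ⊗ χ) ∘ (σ_{PA} ∘ Δ_R ⊗ id) = ν ∘ χ`. -/
theorem nu_comp_chi
    (ΔR : P →ₗ[k] P ⊗[k] A)
    (hcounit : ∀ u : P, TensorProduct.map LinearMap.id Coalgebra.counit (ΔR u) = u ⊗ₜ (1 : k))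
    (hcoassoc : ∀ u : P, TensorProduct.map ΔR LinearMap.id (ΔR u)
      = (TensorProduct.assoc k P A A).symm (TensorProduct.map LinearMap.id Coalgebra.comul (ΔR u)))
    (hone : ΔR 1 = 1)
    (hmul : ∀ u v : P, ΔR (u * v) = ΔR u * ΔR v) :
    TensorProduct.map LinearMap.id (chiMap k A P ΔR) ∘ₗ
        (TensorProduct.assoc k A P P).toLinearMap ∘ₗ
        TensorProduct.map ((TensorProduct.comm k P A).toLinearMap ∘ₗ ΔR) LinearMap.id
      = nuMap k A P ΔR ∘ₗ chiMap k A P ΔR := by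
  apply TensorProduct.ext'
  intro u v
  -- Step 1: LHS = Bmap (ΔR u ⊗ ΔR v)
  have h1 : ∀ x : P ⊗[k] A,
      TensorProduct.map LinearMap.id (chiMap k A P ΔR)
        ((TensorProduct.assoc k A P P) ((TensorProduct.comm k P A x) ⊗ₜ[k] v))
      = Bmap k A P (x ⊗ₜ[k] ΔR v) := by
    intro x
    induction x using TensorProduct.induction_on with
    | zero => simp
    | tmul p a =>
      simp only [comm_tmul, assoc_tmul, map_tmul, LinearMap.id_coe, id_eq, chiMap,
        LinearMap.comp_apply, LinearEquiv.coe_coe]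
      generalize ΔR v = w
      induction w using TensorProduct.induction_on with
      | zero => simp [Bmap]
      | tmul q b =>
        simp [Bmap, LinearMap.mul'_apply]
      | add w₁ w₂ ih₁ ih₂ =>
        simp only [tmul_add, map_add] at *
        rw [ih₁, ih₂]
    | add x₁ x₂ ih₁ ih₂ =>
      simp only [map_add, add_tmul] at *
      rw [ih₁, ih₂]
  -- Step 2: RHS = Cmap (ΔR u ⊗ (map ΔR id) (ΔR v))
  have h2 : nuMap k A P ΔR (chiMap k A P ΔR (u ⊗ₜ[k] v))
      = Cmap k A P (ΔR u ⊗ₜ[k] TensorProduct.map ΔR LinearMap.id (ΔR v)) := by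
    simp only [chiMap, LinearMap.comp_apply, map_tmul, LinearMap.id_coe, id_eq,
      LinearEquiv.coe_coe]
    generalize ΔR v = w
    induction w using TensorProduct.induction_on with
    | zero => simp [Cmap]
    | tmul q b =>
      simp only [assoc_symm_tmul, map_tmul, LinearMap.mul'_apply, LinearMap.id_coe, id_eq,
        nuMap, Cmap, LinearMap.comp_apply, LinearEquiv.coe_coe]
      rw [hmul]
    | add w₁ w₂ ih₁ ih₂ =>
      simp only [tmul_add, map_add] at *
      rw [ih₁, ih₂]
  -- Step 3: Bmap (x ⊗ w) = Cmap (x ⊗ assoc.symm (map id comul w))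
  have h3 : ∀ (x w : P ⊗[k] A), Bmap k A P (x ⊗ₜ[k] w)
      = Cmap k A P (x ⊗ₜ[k] (TensorProduct.assoc k P A A).symm
          (TensorProduct.map LinearMap.id Coalgebra.comul w)) := by
    intro x w
    induction x using TensorProduct.induction_on with
    | zero => simp
    | tmul p a =>
      induction w using TensorProduct.induction_on with
      | zero => simp
      | tmul q b =>
        have step : ∀ c : A ⊗[k] A,
            Cmap k A P ((p ⊗ₜ[k] a) ⊗ₜ[k] (TensorProduct.assoc k P A A).symm (q ⊗ₜ[k] c))
            = TensorProduct.map (LinearMap.mulLeft k a) (TensorProduct.mk k P A (p * q))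
                ((LinearMap.mul' k A).rTensor A
                  ((TensorProduct.assoc k A A A).symm
                    ((((HopfAlgebra.antipode (R := k)).rTensor A ∘ₗ Coalgebra.comul).lTensor A)
                      c))) := by
          intro c
          induction c using TensorProduct.induction_on with
          | zero => simp
          | tmul c₁ c₂ =>
            have inner : ∀ t : A ⊗[k] A,
                TensorProduct.map (LinearMap.mul' k A) LinearMap.id
                  ((TensorProduct.tensorTensorTensorComm k A P A A)
                    (((a * c₁) ⊗ₜ[k] (p * q)) ⊗ₜ[k] t))
                = TensorProduct.map (LinearMap.mulLeft k a) (TensorProduct.mk k P A (p * q))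
                    ((LinearMap.rTensor A (LinearMap.mul' k A))
                      ((TensorProduct.assoc k A A A).symm (c₁ ⊗ₜ[k] t))) := by
              intro t
              induction t using TensorProduct.induction_on with
              | zero => simp
              | tmul s₁ s₂ => simp [LinearMap.mul'_apply, mul_assoc]
              | add t₁ t₂ ih₁ ih₂ =>
                simp only [tmul_add, map_add] at *
                rw [ih₁, ih₂]
            simp only [assoc_symm_tmul, Cmap, LinearMap.comp_apply, LinearEquiv.coe_coe,
              map_tmul, LinearMap.mul'_apply, LinearMap.id_coe, id_eq,
              Algebra.TensorProduct.tmul_mul_tmul, LinearMap.lTensor_tmul, comm_tmul]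
            exact inner _
          | add c₁ c₂ ih₁ ih₂ =>
            simp only [tmul_add, map_add] at *
            rw [ih₁, ih₂]
        simp only [map_tmul, LinearMap.id_coe, id_eq]
        rw [step, hopf_aux k A b]
        simp [Bmap, LinearMap.mul'_apply]
      | add w₁ w₂ ih₁ ih₂ =>
        simp only [tmul_add, map_add] at *
        rw [ih₁, ih₂]
    | add x₁ x₂ ih₁ ih₂ =>
      simp only [add_tmul, map_add] at *
      rw [ih₁, ih₂]
  simp only [LinearMap.comp_apply, map_tmul, LinearMap.id_coe, id_eq, LinearEquiv.coe_coe]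
  rw [h1 (ΔR u), h2, h3, hcoassoc]
end
end

section
/- Let P be a right A-comodule algebra. Equip P ⊗ P with the tensor product coaction Δ_R^⊗(u ⊗ v) = u⁽¹⁾ ⊗ v⁽¹⁾ ⊗ u⁽²⁾v⁽²⁾ and P ⊗ A with the coaction Δ_R^{Ad}(u ⊗ a) = u⁽¹⁾ ⊗ a₂ ⊗ u⁽²⁾ S(a₁) a₃ (using the right adjoint coaction Ad(a) = a₂ ⊗ S(a₁)a₃ on A). Then (χ ⊗ id) ∘ Δ_R^⊗ = Δ_R^{Ad} ∘ χ. -/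
open TensorProduct

noncomputable section

variable (k : Type*) [Field k]

variable (A P : Type*) [Ring A] [HopfAlgebra k A] [Ring P] [Algebra k P]

/-- The tensor product coaction `Δ_R^⊗` on `P ⊗ P`: `u ⊗ v ↦ u⁽¹⁾ ⊗ v⁽¹⁾ ⊗ u⁽²⁾v⁽²⁾`. -/
def deltaTens (ΔR : P →ₗ[k] P ⊗[k] A) : P ⊗[k] P →ₗ[k] (P ⊗[k] P) ⊗[k] A :=
  TensorProduct.map LinearMap.id (LinearMap.mul' k A) ∘ₗ
    (TensorProduct.tensorTensorTensorComm k P A P A).toLinearMap ∘ₗ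
    TensorProduct.map ΔR ΔR

/-- The coaction `Δ_R^{Ad}` on `P ⊗ A`: `u ⊗ a ↦ u⁽¹⁾ ⊗ a₂ ⊗ u⁽²⁾ S(a₁) a₃`. -/
def deltaAd (ΔR : P →ₗ[k] P ⊗[k] A) : P ⊗[k] A →ₗ[k] (P ⊗[k] A) ⊗[k] A :=
  TensorProduct.map LinearMap.id (LinearMap.mul' k A) ∘ₗ
    (TensorProduct.tensorTensorTensorComm k P A A A).toLinearMap ∘ₗ
    TensorProduct.map ΔR (adCoaction k A)

/-! Embed `P ⊗ A` into `(P ⊗ A) ⊗ A` by `p ⊗ a ↦ (p ⊗ 1) ⊗ a`. Then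
`(χ ⊗ id) Δ_R^⊗ (u ⊗ v) = Δ_R(u) · (Δ_R ⊗ id) Δ_R(v)` and, `Δ_R` being multiplicative,
`Δ_R^{Ad} χ(u ⊗ v) = Δ_R(u) · Δ_R^{Ad}(Δ_R v)`, so it suffices that
`Δ_R^{Ad} ∘ Δ_R = (Δ_R ⊗ id) ∘ Δ_R`. By coassociativity of `Δ_R` this is `P ⊗ -` applied to the
Hopf algebra identity `(1 ⊗ a₁) Ad(a₂) = a₁ ⊗ a₂`, i.e. `a₃ ⊗ a₁ S(a₂) a₄ = a₁ ⊗ a₂`. In the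
convolution algebra of linear maps `A → A ⊗ A`, `Ad = (j ∘ S) * Δ` for `j a = 1 ⊗ a`, and the
identity reads `j * (j ∘ S) * Δ = Δ`; it holds because `j * (j ∘ S) = j ∘ (id * S) = 1`. -/

open Coalgebra HopfAlgebra WithConv
open Algebra.TensorProduct (includeLeft includeRight)

theorem algHom_mul_comp_antipode {R H B : Type*} [CommSemiring R] [Semiring H]
    [HopfAlgebra R H] [Semiring B] [Algebra R B] (f : H →ₐ[R] B) :
    toConv f.toLinearMap * toConv (f.toLinearMap ∘ₗ antipode R) = 1 := by
  have h := LinearMap.algHom_comp_convMul_distrib f (toConv LinearMap.id) (toConv (antipode R))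
  rw [LinearMap.id_mul_antipode, ofConv_toConv, ofConv_toConv, LinearMap.comp_id] at h
  apply WithConv.ofConv_injective
  rw [← h]
  ext
  simp

section Adjoint

variable {k A}

theorem adCoaction_eq_convMul :
    adCoaction k A = (toConv ((includeRight : A →ₐ[k] A ⊗[k] A).toLinearMap ∘ₗ antipode k) *
      toConv comul).ofConv := by
  have h : LinearMap.mul' k (A ⊗[k] A) ∘ₗ
      TensorProduct.map (includeRight : A →ₐ[k] A ⊗[k] A).toLinearMap LinearMap.id =
        TensorProduct.map LinearMap.id (LinearMap.mul' k A) ∘ₗ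
          (TensorProduct.leftComm k A A A).toLinearMap := by
    ext x y z
    simp
  rw [LinearMap.convMul_def, ofConv_toConv, ofConv_toConv, ofConv_toConv,
    ← LinearMap.id_comp comul, TensorProduct.map_comp, LinearMap.id_comp]
  simp only [← LinearMap.comp_assoc, h]
  simp only [adCoaction, LinearMap.comp_assoc]
  rw [← LinearMap.comp_assoc comul (TensorProduct.map LinearMap.id comul),
    ← TensorProduct.map_comp, LinearMap.comp_id, LinearMap.id_comp]

theorem includeRight_convMul_adCoaction :
    toConv (includeRight : A →ₐ[k] A ⊗[k] A).toLinearMap * toConv (adCoaction k A) =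
      toConv comul := by
  rw [adCoaction_eq_convMul, toConv_ofConv, ← mul_assoc, algHom_mul_comp_antipode, one_mul]

end Adjoint

section Comodule

variable {k A P} (ΔR : P →ₗ[k] P ⊗[k] A)

local notation "ι" => Algebra.TensorProduct.map (includeLeft : P →ₐ[k] P ⊗[k] A) (AlgHom.id k A)
local notation "κ" => Algebra.TensorProduct.map (includeRight : A →ₐ[k] P ⊗[k] A) (AlgHom.id k A)

theorem chiMap_tmul (u v : P) : chiMap k A P ΔR (u ⊗ₜ v) = (u ⊗ₜ 1) * ΔR v := by
  have h : chiMap k A P ΔR =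
      (LinearMap.mul' k (P ⊗[k] A) ∘ₗ TensorProduct.map includeLeft.toLinearMap LinearMap.id) ∘ₗ
        TensorProduct.map LinearMap.id ΔR := by
    rw [chiMap, ← LinearMap.comp_assoc]
    congr 1
    ext
    simp
  simp [h]

theorem deltaAd_tmul (p : P) (a : A) :
    deltaAd k A P ΔR (p ⊗ₜ a) = ι (ΔR p) * κ (adCoaction k A a) := by
  have h : deltaAd k A P ΔR = LinearMap.mul' k ((P ⊗[k] A) ⊗[k] A) ∘ₗ
      TensorProduct.map (AlgHom.toLinearMap ι) (AlgHom.toLinearMap κ) ∘ₗ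
        TensorProduct.map ΔR (adCoaction k A) := by
    simp only [deltaAd, ← LinearMap.comp_assoc]
    congr 1
    ext
    simp [Algebra.TensorProduct.tmul_mul_tmul]
  simp only [h, LinearMap.comp_apply, TensorProduct.map_tmul, LinearMap.mul'_apply,
    AlgHom.toLinearMap_apply]

theorem map_chiMap_deltaTens (u v : P) :
    TensorProduct.map (chiMap k A P ΔR) LinearMap.id (deltaTens k A P ΔR (u ⊗ₜ v)) =
      ι (ΔR u) * LinearMap.rTensor A ΔR (ΔR v) := by
  have h : TensorProduct.map (chiMap k A P ΔR) LinearMap.id ∘ₗ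
      TensorProduct.map LinearMap.id (LinearMap.mul' k A) ∘ₗ
        (TensorProduct.tensorTensorTensorComm k P A P A).toLinearMap =
      LinearMap.mul' k ((P ⊗[k] A) ⊗[k] A) ∘ₗ
        TensorProduct.map (AlgHom.toLinearMap ι) (LinearMap.rTensor A ΔR) := by
    ext
    simp [chiMap_tmul, Algebra.TensorProduct.tmul_mul_tmul]
  simpa only [deltaTens, LinearMap.comp_apply, TensorProduct.map_tmul, LinearMap.mul'_apply,
    AlgHom.toLinearMap_apply, LinearEquiv.coe_coe] using congr($h (ΔR u ⊗ₜ ΔR v))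

theorem deltaAd_tmul_one_mul (hmul : ∀ u v : P, ΔR (u * v) = ΔR u * ΔR v) (u : P)
    (x : P ⊗[k] A) : deltaAd k A P ΔR ((u ⊗ₜ 1) * x) = ι (ΔR u) * deltaAd k A P ΔR x := by
  induction x using TensorProduct.induction_on with
  | zero => simp
  | tmul p a => simp [Algebra.TensorProduct.tmul_mul_tmul, deltaAd_tmul, hmul, mul_assoc]
  | add x y hx hy => simp only [mul_add, map_add, hx, hy]

theorem deltaAd_comp_coaction
    (hcoassoc : ∀ u : P, TensorProduct.map ΔR LinearMap.id (ΔR u)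
      = (TensorProduct.assoc k P A A).symm (TensorProduct.map LinearMap.id comul (ΔR u))) :
    deltaAd k A P ΔR ∘ₗ ΔR = LinearMap.rTensor A ΔR ∘ₗ ΔR := by
  set K := LinearMap.mul' k ((P ⊗[k] A) ⊗[k] A) ∘ₗ
    TensorProduct.map (AlgHom.toLinearMap ι) (AlgHom.toLinearMap κ ∘ₗ adCoaction k A)
  set α := (TensorProduct.assoc k P A A).symm.toLinearMap
  have hK : deltaAd k A P ΔR = K ∘ₗ LinearMap.rTensor A ΔR := by
    refine TensorProduct.ext' fun p a => ?_
    simp only [K, deltaAd_tmul, LinearMap.comp_apply, LinearMap.rTensor_tmul,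
      TensorProduct.map_tmul, LinearMap.mul'_apply, AlgHom.toLinearMap_apply]
  have hKα : K ∘ₗ α = α ∘ₗ LinearMap.lTensor P (LinearMap.mul' k (A ⊗[k] A) ∘ₗ
      TensorProduct.map (includeRight : A →ₐ[k] A ⊗[k] A).toLinearMap (adCoaction k A)) := by
    ext p x y
    simp only [TensorProduct.AlgebraTensorModule.curry_apply, TensorProduct.curry_apply,
      LinearMap.coe_restrictScalars, K, α, LinearMap.comp_apply, LinearEquiv.coe_coe,
      TensorProduct.assoc_symm_tmul, LinearMap.lTensor_tmul, TensorProduct.map_tmul,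
      LinearMap.mul'_apply, AlgHom.toLinearMap_apply]
    induction adCoaction k A y using TensorProduct.induction_on with
    | zero => simp
    | tmul b c => simp [Algebra.TensorProduct.tmul_mul_tmul]
    | add s t hs ht => simp only [mul_add, map_add, TensorProduct.tmul_add, hs, ht]
  have hΔR : LinearMap.rTensor A ΔR ∘ₗ ΔR = α ∘ₗ LinearMap.lTensor P comul ∘ₗ ΔR :=
    LinearMap.ext hcoassoc
  calc deltaAd k A P ΔR ∘ₗ ΔR = K ∘ₗ α ∘ₗ LinearMap.lTensor P comul ∘ₗ ΔR := by
        rw [hK, LinearMap.comp_assoc, hΔR]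
    _ = α ∘ₗ LinearMap.lTensor P (toConv (includeRight : A →ₐ[k] A ⊗[k] A).toLinearMap *
          toConv (adCoaction k A)).ofConv ∘ₗ ΔR := by
        rw [← LinearMap.comp_assoc, hKα, LinearMap.comp_assoc, ← LinearMap.comp_assoc ΔR,
          ← LinearMap.lTensor_comp, LinearMap.convMul_def]
        simp only [LinearMap.comp_assoc]
    _ = LinearMap.rTensor A ΔR ∘ₗ ΔR := by
        rw [includeRight_convMul_adCoaction, ofConv_toConv, hΔR]

end Comodule

theorem chi_equivariant_adjoint
    (ΔR : P →ₗ[k] P ⊗[k] A)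
    (hcoassoc : ∀ u : P, TensorProduct.map ΔR LinearMap.id (ΔR u)
      = (TensorProduct.assoc k P A A).symm (TensorProduct.map LinearMap.id Coalgebra.comul (ΔR u)))
    (hmul : ∀ u v : P, ΔR (u * v) = ΔR u * ΔR v) :
    TensorProduct.map (chiMap k A P ΔR) LinearMap.id ∘ₗ deltaTens k A P ΔR
      = deltaAd k A P ΔR ∘ₗ chiMap k A P ΔR := by
  refine TensorProduct.ext' fun u v => ?_
  rw [LinearMap.comp_apply, LinearMap.comp_apply, map_chiMap_deltaTens, chiMap_tmul,
    deltaAd_tmul_one_mul ΔR hmul, ← LinearMap.comp_apply (deltaAd k A P ΔR),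
    deltaAd_comp_coaction ΔR hcoassoc, LinearMap.comp_apply]
end
end

section
/- Let P(B,A) be a quantum principal bundle, i.e., the coaction Δ_R of A on P is free (χ surjective) and exact (ker χ|_{P²} = P B² P where B = P^A, P² = ker of multiplication P ⊗ P → P). Then the translation map τ : A → P ⊗_B P sending a to the class of any element of χ⁻¹(1 ⊗ a) is a well-defined linear map. -/
open TensorProduct

noncomputable section

variable (k : Type*) [Field k]

variable (A P : Type*) [Ring A] [HopfAlgebra k A] [Ring P] [Algebra k P]

set_option synthInstance.maxHeartbeats 400000

section Aux

variable {k : Type*} [Field k] {A P : Type*} [Ring A] [HopfAlgebra k A] [Ring P] [Algebra k P]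

lemma mul_eq_chi (ΔR : P →ₗ[k] P ⊗[k] A)
    (hcounit : ∀ u : P, TensorProduct.map LinearMap.id Coalgebra.counit (ΔR u) = u ⊗ₜ (1 : k)) :
    (LinearMap.mul' k P) = (TensorProduct.rid k P).toLinearMap ∘ₗ
      TensorProduct.map LinearMap.id Coalgebra.counit ∘ₗ chiMap k A P ΔR := by
  apply TensorProduct.ext'
  intro u v
  have aux : ∀ (u : P) (x : P ⊗[k] A),
      (TensorProduct.rid k P) (TensorProduct.map LinearMap.id Coalgebra.counit
        (TensorProduct.map (LinearMap.mul' k P) LinearMap.id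
          ((TensorProduct.assoc k P P A).symm (u ⊗ₜ x))))
      = u * (TensorProduct.rid k P) (TensorProduct.map LinearMap.id Coalgebra.counit x) := by
    intro u x
    induction x using TensorProduct.induction_on with
    | zero => simp only [tmul_zero, map_zero, LinearEquiv.map_zero, mul_zero]
    | tmul p a => simp [TensorProduct.smul_tmul', mul_smul_comm]
    | add x y hx hy => simp [tmul_add, map_add, hx, hy, mul_add]
  simp only [chiMap, LinearMap.comp_apply, map_tmul, LinearMap.id_apply,
    LinearEquiv.coe_coe]
  rw [aux, hcounit]
  simp
  
lemma ker_chi_le_ker_mul (ΔR : P →ₗ[k] P ⊗[k] A)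
    (hcounit : ∀ u : P, TensorProduct.map LinearMap.id Coalgebra.counit (ΔR u) = u ⊗ₜ (1 : k)) :
    LinearMap.ker (chiMap k A P ΔR) ≤ LinearMap.ker (LinearMap.mul' k P) := by
  intro w hw
  simp only [LinearMap.mem_ker] at hw ⊢
  rw [mul_eq_chi ΔR hcounit]
  simp [hw]

lemma PB2P_le_relSub (ΔR : P →ₗ[k] P ⊗[k] A) :
    PB2P k A P ΔR ≤ relSub k A P ΔR := by
  rw [PB2P, Submodule.span_le]
  rintro w ⟨u, v, x, ⟨hxBB, hxker⟩, rfl⟩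
  -- F x = map (mulLeft u) (mulRight v) x - u ⊗ (mul' x * v)
  set F : P ⊗[k] P →ₗ[k] P ⊗[k] P :=
    TensorProduct.map (LinearMap.mulLeft k u) (LinearMap.mulRight k v) -
      (TensorProduct.mk k P P u ∘ₗ LinearMap.mulRight k v ∘ₗ LinearMap.mul' k P) with hF
  have key : BBsub k A P ΔR ≤ Submodule.comap F (relSub k A P ΔR) := by
    rw [BBsub, Submodule.span_le]
    rintro y ⟨b, c, hb, hc, rfl⟩
    simp only [SetLike.mem_coe, Submodule.mem_comap, hF, LinearMap.sub_apply,
      LinearMap.comp_apply, TensorProduct.map_tmul, TensorProduct.mk_apply,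
      LinearMap.mul'_apply, LinearMap.mulLeft_apply, LinearMap.mulRight_apply]
    apply Submodule.subset_span
    exact ⟨u, c * v, b, hb, by rw [mul_assoc]⟩
  have hFx : F x ∈ relSub k A P ΔR := key hxBB
  have hx0 : LinearMap.mul' k P x = 0 := hxker
  simpa [hF, hx0] using hFx

end Aux

/-- In a quantum principal bundle (free and exact coaction), the translation map
`τ : A → P ⊗_B P`, sending `a` to the class of any element of `χ⁻¹(1 ⊗ a)`,
is a well-defined linear map. -/
theorem translation_map_well_defined
    (ΔR : P →ₗ[k] P ⊗[k] A)
    (hcounit : ∀ u : P, TensorProduct.map LinearMap.id Coalgebra.counit (ΔR u) = u ⊗ₜ (1 : k))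
    (hcoassoc : ∀ u : P, TensorProduct.map ΔR LinearMap.id (ΔR u)
      = (TensorProduct.assoc k P A A).symm (TensorProduct.map LinearMap.id Coalgebra.comul (ΔR u)))
    (hone : ΔR 1 = 1)
    (hmul : ∀ u v : P, ΔR (u * v) = ΔR u * ΔR v)
    (hfree : Function.Surjective (chiMap k A P ΔR))
    (hexact : LinearMap.ker (chiMap k A P ΔR) ⊓ LinearMap.ker (LinearMap.mul' k P)
      = PB2P k A P ΔR) :
    ∃ τ : A →ₗ[k] (P ⊗[k] P) ⧸ relSub k A P ΔR,
      ∀ (a : A) (w : P ⊗[k] P), chiMap k A P ΔR w = (1 : P) ⊗ₜ a →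
        Submodule.Quotient.mk w = τ a := by
  have hker : LinearMap.ker (chiMap k A P ΔR) ≤ relSub k A P ΔR := by
    have h1 := ker_chi_le_ker_mul ΔR hcounit
    have : LinearMap.ker (chiMap k A P ΔR)
        = LinearMap.ker (chiMap k A P ΔR) ⊓ LinearMap.ker (LinearMap.mul' k P) :=
      (inf_eq_left.mpr h1).symm
    rw [this, hexact]
    exact PB2P_le_relSub ΔR
  let e := (chiMap k A P ΔR).quotKerEquivOfSurjective hfree
  let g : (P ⊗[k] P) ⧸ LinearMap.ker (chiMap k A P ΔR) →ₗ[k] (P ⊗[k] P) ⧸ relSub k A P ΔR :=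
    Submodule.liftQ _ (relSub k A P ΔR).mkQ (by rwa [Submodule.ker_mkQ])
  refine ⟨g ∘ₗ e.symm.toLinearMap ∘ₗ TensorProduct.mk k P A 1, ?_⟩
  intro a w hw
  have he : e (Submodule.Quotient.mk w) = chiMap k A P ΔR w := rfl
  have hsymm : e.symm ((1 : P) ⊗ₜ a) = Submodule.Quotient.mk w := by
    rw [← hw, ← he, LinearEquiv.symm_apply_apply]
  simp only [LinearMap.comp_apply, TensorProduct.mk_apply, LinearEquiv.coe_coe, hsymm]
  rfl
end
end

section
/- Let P be a right A-comodule algebra with free coaction Δ_R, B = P^A. If there exists a translation map τ : A → P ⊗_B P (i.e., a linear map with τ(a) the class of some element of χ⁻¹(1 ⊗ a) for each a), then the coaction is exact: ker(χ|_{P²}) = P B² P; hence P(B,A) is a quantum principal bundle. -/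
open TensorProduct

noncomputable section

variable (k : Type*) [Field k]

variable (A P : Type*) [Ring A] [HopfAlgebra k A] [Ring P] [Algebra k P]

/-- If the coaction is free and `P` admits a translation map `τ : A → P ⊗_B P`,
then the coaction is exact, so `P(B,A)` is a quantum principal bundle. -/
theorem exact_of_translation_map
    (ΔR : P →ₗ[k] P ⊗[k] A)
    (hcounit : ∀ u : P, TensorProduct.map LinearMap.id Coalgebra.counit (ΔR u) = u ⊗ₜ (1 : k))
    (hcoassoc : ∀ u : P, TensorProduct.map ΔR LinearMap.id (ΔR u)
      = (TensorProduct.assoc k P A A).symm (TensorProduct.map LinearMap.id Coalgebra.comul (ΔR u)))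
    (hone : ΔR 1 = 1)
    (hmul : ∀ u v : P, ΔR (u * v) = ΔR u * ΔR v)
    (hfree : Function.Surjective (chiMap k A P ΔR))
    (τ : A →ₗ[k] (P ⊗[k] P) ⧸ relSub k A P ΔR)
    (hτ : ∀ (a : A) (w : P ⊗[k] P), chiMap k A P ΔR w = (1 : P) ⊗ₜ a →
      Submodule.Quotient.mk w = τ a) :
    LinearMap.ker (chiMap k A P ΔR) ⊓ LinearMap.ker (LinearMap.mul' k P)
      = PB2P k A P ΔR := by
  have chi_tmul : ∀ p q : P, chiMap k A P ΔR (p ⊗ₜ q)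
      = LinearMap.rTensor A (LinearMap.mulLeft k p) (ΔR q) := by
    intro p q
    have h : ∀ y : P ⊗[k] A,
        (TensorProduct.map (LinearMap.mul' k P) LinearMap.id)
          ((TensorProduct.assoc k P P A).symm (p ⊗ₜ y))
          = LinearMap.rTensor A (LinearMap.mulLeft k p) y := by
      intro y
      induction y using TensorProduct.induction_on with
      | zero => rw [tmul_zero, LinearEquiv.map_zero, map_zero, map_zero]
      | tmul r s => simp [TensorProduct.assoc_symm_tmul]
      | add y z hy hz => rw [tmul_add, map_add, map_add, hy, hz, map_add]
    simp only [chiMap, LinearMap.comp_apply, TensorProduct.map_tmul, LinearMap.id_apply,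
      LinearEquiv.coe_coe]
    exact h (ΔR q)
  -- multiplying the second factor by a coinvariant on the left can be moved across χ
  have chi_coinv : ∀ (p c v : P), ΔR c = c ⊗ₜ 1 →
      chiMap k A P ΔR (p ⊗ₜ (c * v)) = chiMap k A P ΔR ((p * c) ⊗ₜ v) := by
    intro p c v hc
    rw [chi_tmul, chi_tmul, hmul, hc]
    induction ΔR v using TensorProduct.induction_on with
    | zero => simp
    | tmul r s =>
        simp [Algebra.TensorProduct.tmul_mul_tmul, mul_assoc]
    | add y z hy hz => simp [mul_add, hy, hz]
  apply le_antisymm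
  · -- hard direction: ker χ ⊓ ker mult ≤ P B² P, via the translation map
    intro w hw
    rw [Submodule.mem_inf] at hw
    have hker : chiMap k A P ΔR w = (1 : P) ⊗ₜ (0 : A) := by
      rw [tmul_zero]; exact hw.1
    have hrel : w ∈ relSub k A P ΔR := by
      have h0 := hτ 0 w hker
      rw [map_zero] at h0
      exact (Submodule.Quotient.mk_eq_zero _).1 h0
    -- now show relSub ≤ PB2P
    refine Submodule.span_le.2 ?_ hrel
    rintro x ⟨u, v, b, hb, hx⟩
    refine Submodule.subset_span ⟨u, v, b ⊗ₜ 1 - 1 ⊗ₜ b, ?_, ?_⟩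
    · rw [Submodule.mem_inf]
      constructor
      · have h1 : ΔR 1 = (1 : P) ⊗ₜ (1 : A) := by
          rw [hone, Algebra.TensorProduct.one_def]
        exact sub_mem (Submodule.subset_span ⟨b, 1, hb, h1, rfl⟩)
          (Submodule.subset_span ⟨1, b, h1, hb, rfl⟩)
      · rw [LinearMap.mem_ker, map_sub, LinearMap.mul'_apply, LinearMap.mul'_apply]
        simp
    · rw [hx, map_sub]
      simp [TensorProduct.map_tmul, LinearMap.mulLeft_apply, LinearMap.mulRight_apply]
  · -- easy direction: P B² P ≤ ker χ ⊓ ker mult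
    refine Submodule.span_le.2 ?_
    rintro w ⟨u, v, x, hx, hw⟩
    rw [Submodule.mem_inf] at hx
    obtain ⟨hxBB, hxmul⟩ := hx
    rw [LinearMap.mem_ker] at hxmul
    rw [SetLike.mem_coe, Submodule.mem_inf, LinearMap.mem_ker, LinearMap.mem_ker, hw]
    have mulkey : ∀ y : P ⊗[k] P,
        LinearMap.mul' k P
          (TensorProduct.map (LinearMap.mulLeft k u) (LinearMap.mulRight k v) y)
          = u * LinearMap.mul' k P y * v := by
      intro y
      induction y using TensorProduct.induction_on with
      | zero => simp
      | tmul p q => simp [mul_assoc]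
      | add y z hy hz => simp [hy, hz, mul_add, add_mul]
    have key : ∀ y ∈ BBsub k A P ΔR,
        chiMap k A P ΔR
          (TensorProduct.map (LinearMap.mulLeft k u) (LinearMap.mulRight k v) y)
          = chiMap k A P ΔR ((u * LinearMap.mul' k P y) ⊗ₜ v) := by
      intro y hy
      induction hy using Submodule.span_induction with
      | mem y hy =>
          obtain ⟨b, c, hb, hc, rfl⟩ := hy
          rw [TensorProduct.map_tmul, LinearMap.mulLeft_apply, LinearMap.mulRight_apply,
            chi_coinv _ _ _ hc, LinearMap.mul'_apply]
          rw [mul_assoc]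
      | zero => simp
      | add y z _ _ hy hz =>
          rw [map_add, map_add, hy, hz, map_add, mul_add, add_tmul, map_add]
      | smul a y _ hy =>
          rw [map_smul, map_smul, hy, map_smul, mul_smul_comm, ← smul_tmul', map_smul]
    constructor
    · rw [key x hxBB, hxmul, mul_zero, zero_tmul, map_zero]
    · rw [mulkey, hxmul, mul_zero, zero_mul]
end
end

section
/- Let P and A be Hopf algebras and π : P → A a surjective Hopf algebra map, with right coaction Δ_R = (id ⊗ π) ∘ Δ_P on P. Then for each a ∈ A and u ∈ π⁻¹(a), χ(S(u₁) ⊗ u₂) = 1 ⊗ a; hence τ(a) = S(u₁) ⊗_B u₂ defines a translation map on the quantum principal bundle over the homogeneous space B = P^A. -/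
open TensorProduct

noncomputable section

variable (k : Type*) [Field k]

variable (A P : Type*) [Ring A] [HopfAlgebra k A] [Ring P] [Algebra k P]

/-! `χ` for `Δ_R = (id ⊗ π) ∘ Δ_P` is `χ` for the regular coaction `Δ_P` followed by `id ⊗ π`.
For `Δ_P`, coassociativity gives `χ(S(u₁) ⊗ u₂) = S(u₁)u₂ ⊗ u₃`, and the antipode and counit
axioms reduce this to `1 ⊗ u`. -/

section

variable {k A P}

theorem chiMap_lTensor_comp {A' : Type*} [Ring A'] [HopfAlgebra k A'] (f : A →ₗ[k] A')
    (ΔR : P →ₗ[k] P ⊗[k] A) :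
    chiMap k A' P (f.lTensor P ∘ₗ ΔR) = f.lTensor P ∘ₗ chiMap k A P ΔR := by
  refine TensorProduct.ext' fun u v => ?_
  simp only [chiMap, LinearMap.comp_apply, map_tmul, LinearMap.id_apply]
  induction ΔR v using TensorProduct.induction_on with
  | zero => simp
  | tmul p a => simp
  | add x y hx hy => simp only [map_add, tmul_add, hx, hy]

theorem chiMap_comp_rTensor (f : P →ₗ[k] P) (ΔR : P →ₗ[k] P ⊗[k] A) :
    chiMap k A P ΔR ∘ₗ f.rTensor P =
      (LinearMap.mul' k P ∘ₗ f.rTensor P).rTensor A ∘ₗ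
        (TensorProduct.assoc k P P A).symm.toLinearMap ∘ₗ ΔR.lTensor P := by
  refine TensorProduct.ext' fun u v => ?_
  simp only [chiMap, LinearMap.comp_apply, map_tmul, LinearMap.id_apply, LinearMap.rTensor_tmul,
    LinearMap.lTensor_tmul]
  induction ΔR v using TensorProduct.induction_on with
  | zero => simp
  | tmul p a => simp
  | add x y hx hy => simp only [map_add, tmul_add, hx, hy]

theorem chiMap_comul_rTensor_antipode_comul {H : Type*} [Ring H] [HopfAlgebra k H] (u : H) :
    chiMap k H H Coalgebra.comul ((HopfAlgebra.antipode k).rTensor H (Coalgebra.comul u)) =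
      1 ⊗ₜ u := by
  rw [← LinearMap.comp_apply (chiMap k H H _), chiMap_comp_rTensor, LinearMap.comp_apply,
    LinearMap.comp_apply, LinearEquiv.coe_coe, Coalgebra.coassoc_symm_apply,
    ← LinearMap.comp_apply, ← LinearMap.rTensor_comp, LinearMap.comp_assoc,
    HopfAlgebra.mul_antipode_rTensor_comul, LinearMap.rTensor_comp_apply,
    Coalgebra.rTensor_counit_comul, LinearMap.rTensor_tmul, Algebra.linearMap_apply, map_one]

end

theorem translation_map_homogeneous_space
    (Q : Type*) [Ring Q] [HopfAlgebra k Q]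
    (π : Q →ₐc[k] A)
    (ΔR : Q →ₗ[k] Q ⊗[k] A)
    (hΔR : ΔR = LinearMap.lTensor Q (π.toCoalgHom.toLinearMap) ∘ₗ Coalgebra.comul) :
    ∀ (a : A) (u : Q), π u = a →
      chiMap k A Q ΔR
        ((HopfAlgebra.antipode (R := k) (A := Q)).rTensor Q (Coalgebra.comul u))
      = (1 : Q) ⊗ₜ a := by
  rintro _ u rfl
  rw [hΔR, chiMap_lTensor_comp, LinearMap.comp_apply, chiMap_comul_rTensor_antipode_comul,
    LinearMap.lTensor_tmul]
  rfl
end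
end

section
/- Let τ(a) = τ⁽¹⁾(a) ⊗_B τ⁽²⁾(a) be the translation map of a quantum principal bundle P(B,A). Then (id ⊗_B Δ_R) ∘ τ = (τ ⊗ id) ∘ Δ, i.e., τ⁽¹⁾(a) ⊗_B Δ_R(τ⁽²⁾(a)) = τ(a₁) ⊗ a₂ for all a ∈ A. -/
set_option synthInstance.maxHeartbeats 1000000
set_option maxHeartbeats 1000000


open TensorProduct

noncomputable section

variable (k : Type*) [Field k]

variable (A P : Type*) [Ring A] [HopfAlgebra k A] [Ring P] [Algebra k P]

section Aux

variable (ΔR : P →ₗ[k] P ⊗[k] A)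

lemma aux_chi_tmul (u v : P) :
    chiMap k A P ΔR (u ⊗ₜ v)
      = TensorProduct.map (LinearMap.mulLeft k u) LinearMap.id (ΔR v) := by
  simp only [chiMap, LinearMap.comp_apply, LinearEquiv.coe_coe, TensorProduct.map_tmul,
    LinearMap.id_apply]
  induction ΔR v using TensorProduct.induction_on with
  | zero => simp
  | tmul p a => simp [TensorProduct.assoc_symm_tmul]
  | add x y hx hy => simp [tmul_add, map_add, hx, hy]

lemma aux_counit_chi
    (hcounit : ∀ u : P, TensorProduct.map LinearMap.id Coalgebra.counit (ΔR u) = u ⊗ₜ (1 : k))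
    (x : P ⊗[k] P) :
    TensorProduct.map LinearMap.id Coalgebra.counit (chiMap k A P ΔR x)
      = (LinearMap.mul' k P x) ⊗ₜ (1 : k) := by
  induction x using TensorProduct.induction_on with
  | zero => simp
  | tmul u v =>
    rw [aux_chi_tmul]
    have step : ∀ w : P ⊗[k] A,
        TensorProduct.map LinearMap.id Coalgebra.counit
            (TensorProduct.map (LinearMap.mulLeft k u) LinearMap.id w)
          = TensorProduct.map (LinearMap.mulLeft k u) LinearMap.id
              (TensorProduct.map LinearMap.id Coalgebra.counit w) := by
      intro w
      induction w using TensorProduct.induction_on with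
      | zero => simp
      | tmul p a => simp
      | add x y hx hy => simp [map_add, hx, hy]
    rw [step, hcounit v]
    simp
  | add x y hx hy => simp [map_add, hx, hy, add_tmul]

lemma aux_mul_eq_zero_of_chi
    (hcounit : ∀ u : P, TensorProduct.map LinearMap.id Coalgebra.counit (ΔR u) = u ⊗ₜ (1 : k))
    (x : P ⊗[k] P) (hx : chiMap k A P ΔR x = 0) :
    LinearMap.mul' k P x = 0 := by
  have h := aux_counit_chi k A P ΔR hcounit x
  rw [hx, map_zero] at h
  have := congrArg (TensorProduct.rid k P) h.symm
  simpa using this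

lemma aux_PB2P_le_relSub : PB2P k A P ΔR ≤ relSub k A P ΔR := by
  rw [PB2P, Submodule.span_le]
  rintro w ⟨u, v, x, hx, rfl⟩
  have key : ∀ y ∈ BBsub k A P ΔR,
      TensorProduct.map (LinearMap.mulLeft k u) (LinearMap.mulRight k v) y
        - u ⊗ₜ (LinearMap.mul' k P y * v) ∈ relSub k A P ΔR := by
    intro y hy
    induction hy using Submodule.span_induction with
    | mem z hz =>
      obtain ⟨b, c, hb, hc, rfl⟩ := hz
      apply Submodule.subset_span
      refine ⟨u, c * v, b, hb, ?_⟩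
      simp [mul_assoc]
    | zero => simp
    | add x y hxB hyB ihx ihy =>
      have := add_mem ihx ihy
      rw [sub_add_sub_comm] at this
      simpa [map_add, add_mul, TensorProduct.tmul_add] using this
    | smul r x hxB ihx =>
      have := (relSub k A P ΔR).smul_mem r ihx
      rw [smul_sub] at this
      simpa [map_smul, TensorProduct.tmul_smul, smul_mul_assoc] using this
  have h := key x hx.1
  have hm : LinearMap.mul' k P x = 0 := hx.2
  rwa [hm, zero_mul, TensorProduct.tmul_zero, sub_zero] at h

lemma aux_ker_chi_le_relSub
    (hcounit : ∀ u : P, TensorProduct.map LinearMap.id Coalgebra.counit (ΔR u) = u ⊗ₜ (1 : k))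
    (hexact : LinearMap.ker (chiMap k A P ΔR) ⊓ LinearMap.ker (LinearMap.mul' k P)
      = PB2P k A P ΔR) :
    LinearMap.ker (chiMap k A P ΔR) ≤ relSub k A P ΔR := by
  intro x hx
  have hx' : chiMap k A P ΔR x = 0 := hx
  have hm : x ∈ LinearMap.ker (LinearMap.mul' k P) :=
    aux_mul_eq_zero_of_chi k A P ΔR hcounit x hx'
  exact aux_PB2P_le_relSub k A P ΔR (hexact ▸ ⟨hx, hm⟩)

lemma aux_chi_rTensor_comm
    (hcoassoc : ∀ u : P, TensorProduct.map ΔR LinearMap.id (ΔR u)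
      = (TensorProduct.assoc k P A A).symm (TensorProduct.map LinearMap.id Coalgebra.comul (ΔR u)))
    (x : P ⊗[k] P) :
    (chiMap k A P ΔR).rTensor A
        ((TensorProduct.assoc k P P A).symm (TensorProduct.map LinearMap.id ΔR x))
      = (TensorProduct.assoc k P A A).symm
          (TensorProduct.map LinearMap.id Coalgebra.comul (chiMap k A P ΔR x)) := by
  induction x using TensorProduct.induction_on with
  | zero => simp
  | tmul u v =>
    have step1 : ∀ w : P ⊗[k] A,
        (chiMap k A P ΔR).rTensor A ((TensorProduct.assoc k P P A).symm (u ⊗ₜ w))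
          = (TensorProduct.map (LinearMap.mulLeft k u) LinearMap.id).rTensor A
              (TensorProduct.map ΔR LinearMap.id w) := by
      intro w
      induction w using TensorProduct.induction_on with
      | zero => simp
      | tmul p a =>
        simp [TensorProduct.assoc_symm_tmul, LinearMap.rTensor_tmul, aux_chi_tmul]
      | add x y hx hy => simp [tmul_add, map_add, hx, hy]
    have step3 : ∀ w : P ⊗[k] A,
        (TensorProduct.map (LinearMap.mulLeft k u) LinearMap.id).rTensor A
            ((TensorProduct.assoc k P A A).symm
              (TensorProduct.map LinearMap.id Coalgebra.comul w))
          = (TensorProduct.assoc k P A A).symm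
              (TensorProduct.map LinearMap.id Coalgebra.comul
                (TensorProduct.map (LinearMap.mulLeft k u) LinearMap.id w)) := by
      intro w
      induction w using TensorProduct.induction_on with
      | zero => simp
      | tmul p a =>
        simp only [TensorProduct.map_tmul, LinearMap.id_apply]
        induction (Coalgebra.comul (R := k) a) using TensorProduct.induction_on with
        | zero => simp
        | tmul a1 a2 => simp [TensorProduct.assoc_symm_tmul, LinearMap.rTensor_tmul]
        | add x y hx hy => simp [tmul_add, map_add, hx, hy]
      | add x y hx hy => simp [map_add, hx, hy]
    calc (chiMap k A P ΔR).rTensor A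
          ((TensorProduct.assoc k P P A).symm (TensorProduct.map LinearMap.id ΔR (u ⊗ₜ v)))
        = (TensorProduct.map (LinearMap.mulLeft k u) LinearMap.id).rTensor A
            (TensorProduct.map ΔR LinearMap.id (ΔR v)) := by
          simp only [TensorProduct.map_tmul, LinearMap.id_apply]; exact step1 (ΔR v)
      _ = (TensorProduct.map (LinearMap.mulLeft k u) LinearMap.id).rTensor A
            ((TensorProduct.assoc k P A A).symm
              (TensorProduct.map LinearMap.id Coalgebra.comul (ΔR v))) := by
          rw [hcoassoc v]
      _ = (TensorProduct.assoc k P A A).symm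
            (TensorProduct.map LinearMap.id Coalgebra.comul
              (TensorProduct.map (LinearMap.mulLeft k u) LinearMap.id (ΔR v))) := step3 (ΔR v)
      _ = (TensorProduct.assoc k P A A).symm
            (TensorProduct.map LinearMap.id Coalgebra.comul (chiMap k A P ΔR (u ⊗ₜ v))) := by
          rw [aux_chi_tmul]
  | add x y hx hy => simp [map_add, hx, hy]

lemma aux_chi_rTensor_sigma (σ : A →ₗ[k] P ⊗[k] P)
    (hσ : ∀ a : A, chiMap k A P ΔR (σ a) = (1 : P) ⊗ₜ a) (t : A ⊗[k] A) :
    (chiMap k A P ΔR).rTensor A (TensorProduct.map σ LinearMap.id t)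
      = (TensorProduct.assoc k P A A).symm ((1 : P) ⊗ₜ t) := by
  induction t using TensorProduct.induction_on with
  | zero => simp
  | tmul a1 a2 =>
    simp [LinearMap.rTensor_tmul, hσ a1, TensorProduct.assoc_symm_tmul]
  | add x y hx hy => simp [tmul_add, map_add, hx, hy]

end Aux

/-- Proposition 3.5(2): `(id ⊗_B Δ_R) ∘ τ = (τ ⊗ id) ∘ Δ`.  Here `σ` is any linear
lift of the translation map (i.e. `χ(σ(a)) = 1 ⊗ a`, so `τ = mk ∘ σ`), and both sides
are compared in `(P ⊗ P) ⊗ A` modulo `relSub ⊗ A`, i.e. in `(P ⊗_B (P ⊗ A))`. -/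
theorem translation_map_coaction_compat
    (ΔR : P →ₗ[k] P ⊗[k] A)
    (hcounit : ∀ u : P, TensorProduct.map LinearMap.id Coalgebra.counit (ΔR u) = u ⊗ₜ (1 : k))
    (hcoassoc : ∀ u : P, TensorProduct.map ΔR LinearMap.id (ΔR u)
      = (TensorProduct.assoc k P A A).symm (TensorProduct.map LinearMap.id Coalgebra.comul (ΔR u)))
    (hone : ΔR 1 = 1)
    (hmul : ∀ u v : P, ΔR (u * v) = ΔR u * ΔR v)
    (hfree : Function.Surjective (chiMap k A P ΔR))
    (hexact : LinearMap.ker (chiMap k A P ΔR) ⊓ LinearMap.ker (LinearMap.mul' k P)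
      = PB2P k A P ΔR)
    (σ : A →ₗ[k] P ⊗[k] P)
    (hσ : ∀ a : A, chiMap k A P ΔR (σ a) = (1 : P) ⊗ₜ a) :
    ∀ a : A,
      Submodule.Quotient.mk
          (p := LinearMap.range ((relSub k A P ΔR).subtype.rTensor A))
          ((TensorProduct.assoc k P P A).symm (TensorProduct.map LinearMap.id ΔR (σ a)))
        = Submodule.Quotient.mk
          (TensorProduct.map σ LinearMap.id (Coalgebra.comul a)) := by
  intro a
  rw [Submodule.Quotient.eq]
  set D : (P ⊗[k] P) ⊗[k] A :=
    (TensorProduct.assoc k P P A).symm (TensorProduct.map LinearMap.id ΔR (σ a))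
      - TensorProduct.map σ LinearMap.id (Coalgebra.comul a) with hD
  have hD0 : (chiMap k A P ΔR).rTensor A D = 0 := by
    rw [hD, map_sub, aux_chi_rTensor_comm k A P ΔR hcoassoc,
      aux_chi_rTensor_sigma k A P ΔR σ hσ, hσ a]
    have : TensorProduct.map (LinearMap.id (R := k) (M := P)) Coalgebra.comul
        ((1 : P) ⊗ₜ a) = (1 : P) ⊗ₜ Coalgebra.comul a := by
      simp
    rw [this, sub_self]
  have hpair : Function.Exact
      ((LinearMap.ker (chiMap k A P ΔR)).subtype.rTensor A)
      ((chiMap k A P ΔR).rTensor A) :=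
    Module.Flat.rTensor_exact (M := A) (LinearMap.exact_subtype_ker_map _)
  obtain ⟨d, hd⟩ := (hpair D).mp hD0
  have hle : LinearMap.ker (chiMap k A P ΔR) ≤ relSub k A P ΔR :=
    aux_ker_chi_le_relSub k A P ΔR hcounit hexact
  have hcomp : (LinearMap.ker (chiMap k A P ΔR)).subtype
      = (relSub k A P ΔR).subtype ∘ₗ Submodule.inclusion hle := by
    ext x; rfl
  rw [hcomp, LinearMap.rTensor_comp, LinearMap.comp_apply] at hd
  exact ⟨(Submodule.inclusion hle).rTensor A d, hd⟩
end
end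

section
/- Let τ be the translation map of a quantum principal bundle P(B,A). Then (σ_{PA} ∘ Δ_R ⊗_B id) ∘ τ = (S ⊗ τ) ∘ Δ, i.e., τ⁽¹⁾(a)⁽²⁾ ⊗ τ⁽¹⁾(a)⁽¹⁾ ⊗_B τ⁽²⁾(a) = S(a₁) ⊗ τ(a₂). -/
open TensorProduct

noncomputable section
set_option maxHeartbeats 1000000
set_option synthInstance.maxHeartbeats 400000

variable (k : Type*) [Field k]

variable (A P : Type*) [Ring A] [HopfAlgebra k A] [Ring P] [Algebra k P]

section Aux
variable (k : Type*) [Field k] (A P : Type*) [Ring A] [HopfAlgebra k A] [Ring P] [Algebra k P]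

def nMap : (P ⊗[k] A) ⊗[k] (P ⊗[k] A) →ₗ[k] A ⊗[k] (P ⊗[k] A) :=
  (TensorProduct.leftComm k P A A).toLinearMap ∘ₗ
    TensorProduct.map (LinearMap.mul' k P) LinearMap.id ∘ₗ
    (TensorProduct.tensorTensorTensorComm k P A P A).toLinearMap

lemma nMap_tmul (p q : P) (a b : A) :
    nMap k A P ((p ⊗ₜ a) ⊗ₜ (q ⊗ₜ b)) = a ⊗ₜ[k] ((p * q) ⊗ₜ[k] b) := by
  simp [nMap]

def vMap : P ⊗[k] A →ₗ[k] (P ⊗[k] A) ⊗[k] (A ⊗[k] A) :=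
  TensorProduct.map LinearMap.id Coalgebra.comul ∘ₗ
    (TensorProduct.assoc k P A A).symm.toLinearMap ∘ₗ
    TensorProduct.map LinearMap.id Coalgebra.comul

lemma vMap_tmul (p : P) (a : A) :
    vMap k A P (p ⊗ₜ a) = TensorProduct.map LinearMap.id Coalgebra.comul
      ((TensorProduct.assoc k P A A).symm (p ⊗ₜ Coalgebra.comul a)) := by
  simp [vMap]

lemma T_lemma (y : A) :
    LinearMap.rTensor A (LinearMap.mul' k A ∘ₗ
        LinearMap.lTensor A (HopfAlgebra.antipode (R := k) (A := A)))
      ((TensorProduct.assoc k A A A).symm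
        (LinearMap.lTensor A (Coalgebra.comul (R := k)) (Coalgebra.comul y)))
    = (1 : A) ⊗ₜ[k] y := by
  rw [Coalgebra.coassoc_symm_apply, ← LinearMap.comp_apply, ← LinearMap.rTensor_comp,
    LinearMap.comp_assoc, HopfAlgebra.mul_antipode_lTensor_comul,
    LinearMap.rTensor_comp, LinearMap.comp_apply, Coalgebra.rTensor_counit_comul,
    LinearMap.rTensor_tmul]
  simp

def bigPsi : (P ⊗[k] A) ⊗[k] (P ⊗[k] A) →ₗ[k] A ⊗[k] (P ⊗[k] A) :=
  TensorProduct.map (LinearMap.mul' k A) LinearMap.id ∘ₗ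
    (TensorProduct.tensorTensorTensorComm k A P A A).toLinearMap ∘ₗ
    TensorProduct.map
      ((TensorProduct.comm k P A).toLinearMap ∘ₗ LinearMap.mul' k (P ⊗[k] A))
      (TensorProduct.map (HopfAlgebra.antipode (R := k)) LinearMap.id) ∘ₗ
    (TensorProduct.assoc k (P ⊗[k] A) (P ⊗[k] A) (A ⊗[k] A)).symm.toLinearMap ∘ₗ
    LinearMap.lTensor (P ⊗[k] A) (vMap k A P)

lemma bigPsi_eq_nMap : bigPsi k A P = nMap k A P := by
  apply TensorProduct.ext_fourfold'
  intro xp xa yp ya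
  rw [nMap_tmul]
  unfold bigPsi
  simp only [LinearMap.comp_apply, LinearEquiv.coe_coe, LinearMap.lTensor_tmul, vMap_tmul]
  have key : ∀ d : A ⊗[k] A,
      TensorProduct.map (LinearMap.mul' k A) LinearMap.id
        ((TensorProduct.tensorTensorTensorComm k A P A A)
          (TensorProduct.map
              ((TensorProduct.comm k P A).toLinearMap ∘ₗ LinearMap.mul' k (P ⊗[k] A))
              (TensorProduct.map (HopfAlgebra.antipode (R := k)) LinearMap.id)
            ((TensorProduct.assoc k (P ⊗[k] A) (P ⊗[k] A) (A ⊗[k] A)).symm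
              ((xp ⊗ₜ xa) ⊗ₜ (TensorProduct.map LinearMap.id Coalgebra.comul
                ((TensorProduct.assoc k P A A).symm (yp ⊗ₜ d)))))))
      = TensorProduct.map (LinearMap.mulLeft k xa) (TensorProduct.mk k P A (xp * yp))
          (LinearMap.rTensor A (LinearMap.mul' k A ∘ₗ
              LinearMap.lTensor A (HopfAlgebra.antipode (R := k)))
            ((TensorProduct.assoc k A A A).symm
              (LinearMap.lTensor A (Coalgebra.comul (R := k)) d))) := by
    intro d
    induction d using TensorProduct.induction_on with
    | zero => simp
    | add x y hx hy => simp only [map_add, tmul_add, LinearEquiv.map_add, hx, hy]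
    | tmul b₁ b₂ =>
      rw [assoc_symm_tmul, map_tmul, LinearMap.lTensor_tmul]
      simp only [LinearMap.id_coe, id_eq]
      have key2 : ∀ e : A ⊗[k] A,
          TensorProduct.map (LinearMap.mul' k A) LinearMap.id
            ((TensorProduct.tensorTensorTensorComm k A P A A)
              (TensorProduct.map
                  ((TensorProduct.comm k P A).toLinearMap ∘ₗ LinearMap.mul' k (P ⊗[k] A))
                  (TensorProduct.map (HopfAlgebra.antipode (R := k)) LinearMap.id)
                ((TensorProduct.assoc k (P ⊗[k] A) (P ⊗[k] A) (A ⊗[k] A)).symm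
                  ((xp ⊗ₜ xa) ⊗ₜ ((yp ⊗ₜ b₁ : P ⊗[k] A) ⊗ₜ e)))))
          = TensorProduct.map (LinearMap.mulLeft k xa) (TensorProduct.mk k P A (xp * yp))
              (LinearMap.rTensor A (LinearMap.mul' k A ∘ₗ
                  LinearMap.lTensor A (HopfAlgebra.antipode (R := k)))
                ((TensorProduct.assoc k A A A).symm (b₁ ⊗ₜ e))) := by
        intro e
        induction e using TensorProduct.induction_on with
        | zero => simp
        | add x y hx hy => simp only [map_add, tmul_add, LinearEquiv.map_add, hx, hy]
        | tmul c₁ c₂ =>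
          simp only [LinearMap.id_coe, id_eq, assoc_symm_tmul, map_tmul,
            LinearMap.comp_apply, LinearMap.mul'_apply, Algebra.TensorProduct.tmul_mul_tmul,
            comm_tmul, tensorTensorTensorComm_tmul, LinearMap.rTensor_tmul,
            LinearMap.lTensor_tmul, TensorProduct.mk_apply, LinearMap.mulLeft_apply]
          simp [mul_assoc]
      exact key2 _
  rw [key, T_lemma]
  simp

/-- `psiMap ΔR (w ⊗ a) = w⁽¹⁾S(a₁) ⊗ (w⁽⁰⁾ ⊗ a₂)`. -/
def psiMap (ΔR : P →ₗ[k] P ⊗[k] A) : P ⊗[k] A →ₗ[k] A ⊗[k] (P ⊗[k] A) :=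
  TensorProduct.map (LinearMap.mul' k A) LinearMap.id ∘ₗ
    (TensorProduct.tensorTensorTensorComm k A P A A).toLinearMap ∘ₗ
    TensorProduct.map ((TensorProduct.comm k P A).toLinearMap ∘ₗ ΔR)
      (TensorProduct.map (HopfAlgebra.antipode (R := k)) LinearMap.id ∘ₗ Coalgebra.comul)

end Aux

/-- Proposition 3.5(1): `(σ_{PA} ∘ Δ_R ⊗_B id) ∘ τ = (S ⊗ τ) ∘ Δ`.  Here `σ` is any
linear lift of the translation map (`χ(σ(a)) = 1 ⊗ a`, `τ = mk ∘ σ`), and both sides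
are compared in `A ⊗ (P ⊗ P)` modulo `A ⊗ relSub`, i.e. in `A ⊗ (P ⊗_B P)`. -/
theorem translation_map_antipode_compat
    (ΔR : P →ₗ[k] P ⊗[k] A)
    (hcounit : ∀ u : P, TensorProduct.map LinearMap.id Coalgebra.counit (ΔR u) = u ⊗ₜ (1 : k))
    (hcoassoc : ∀ u : P, TensorProduct.map ΔR LinearMap.id (ΔR u)
      = (TensorProduct.assoc k P A A).symm (TensorProduct.map LinearMap.id Coalgebra.comul (ΔR u)))
    (hone : ΔR 1 = 1)
    (hmul : ∀ u v : P, ΔR (u * v) = ΔR u * ΔR v)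
    (hfree : Function.Surjective (chiMap k A P ΔR))
    (hexact : LinearMap.ker (chiMap k A P ΔR) ⊓ LinearMap.ker (LinearMap.mul' k P)
      = PB2P k A P ΔR)
    (σ : A →ₗ[k] P ⊗[k] P)
    (hσ : ∀ a : A, chiMap k A P ΔR (σ a) = (1 : P) ⊗ₜ a) :
    ∀ a : A,
      Submodule.Quotient.mk
          (p := LinearMap.range ((relSub k A P ΔR).subtype.lTensor A))
          ((TensorProduct.assoc k A P P)
            (TensorProduct.map ((TensorProduct.comm k P A).toLinearMap ∘ₗ ΔR)
              LinearMap.id (σ a)))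
        = Submodule.Quotient.mk
          (TensorProduct.map (HopfAlgebra.antipode (R := k) (A := A)) σ
            (Coalgebra.comul a)) := by
  intro a
  rw [Submodule.Quotient.eq]
  -- χ on pure tensors
  have hχtmul : ∀ (u v : P), chiMap k A P ΔR (u ⊗ₜ v)
      = TensorProduct.map (LinearMap.mulLeft k u) LinearMap.id (ΔR v) := by
    intro u v
    unfold chiMap
    simp only [LinearMap.comp_apply, LinearEquiv.coe_coe, map_tmul, LinearMap.id_coe, id_eq]
    induction ΔR v using TensorProduct.induction_on with
    | zero => simp
    | tmul p b => simp
    | add x y hx hy => simp only [tmul_add, map_add, hx, hy]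
  -- relSub is contained in ker χ
  have hrel_le : relSub k A P ΔR ≤ LinearMap.ker (chiMap k A P ΔR) := by
    rw [relSub, Submodule.span_le]
    rintro x ⟨u, v, b, hb, rfl⟩
    simp only [SetLike.mem_coe, LinearMap.mem_ker, map_sub]
    rw [hχtmul, hχtmul, hmul b v, hb, sub_eq_zero]
    induction ΔR v using TensorProduct.induction_on with
    | zero => simp
    | tmul p c => simp [Algebra.TensorProduct.tmul_mul_tmul, mul_assoc]
    | add x y hx hy => simp only [map_add, mul_add, hx, hy]
  -- ker χ is contained in ker of multiplication
  have hker_mul : ∀ t : P ⊗[k] P, chiMap k A P ΔR t = 0 → LinearMap.mul' k P t = 0 := by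
    have hfac : ∀ t : P ⊗[k] P, LinearMap.mul' k P t
        = (TensorProduct.rid k P) (LinearMap.lTensor P (Coalgebra.counit (R := k))
            (chiMap k A P ΔR t)) := by
      intro t
      induction t using TensorProduct.induction_on with
      | zero => simp
      | add x y hx hy => simp only [map_add, hx, hy]
      | tmul u v =>
        rw [hχtmul]
        have h2 : ∀ Y : P ⊗[k] A, LinearMap.lTensor P (Coalgebra.counit (R := k))
            (TensorProduct.map (LinearMap.mulLeft k u) LinearMap.id Y)
            = TensorProduct.map (LinearMap.mulLeft k u) LinearMap.id
                (TensorProduct.map LinearMap.id (Coalgebra.counit (R := k)) Y) := by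
          intro Y
          induction Y using TensorProduct.induction_on with
          | zero => simp
          | add x y hx hy => simp only [map_add, hx, hy]
          | tmul p b => simp
        rw [h2, hcounit v]
        simp
    intro t ht
    rw [hfac, ht]
    simp
  -- PB2P is contained in relSub
  have hPB2P_le : PB2P k A P ΔR ≤ relSub k A P ΔR := by
    rw [PB2P, Submodule.span_le]
    rintro w ⟨u, v, x, hx, rfl⟩
    obtain ⟨hxBB, hxmul⟩ := hx
    have key : ∀ y ∈ BBsub k A P ΔR,
        TensorProduct.map (LinearMap.mulLeft k u) (LinearMap.mulRight k v) y
          - u ⊗ₜ (LinearMap.mul' k P y * v) ∈ relSub k A P ΔR := by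
      intro y hy
      induction hy using Submodule.span_induction with
      | mem z hz =>
        obtain ⟨b, c, hb, hc, rfl⟩ := hz
        simp only [map_tmul, LinearMap.mul'_apply, LinearMap.mulLeft_apply,
          LinearMap.mulRight_apply]
        exact Submodule.subset_span ⟨u, c * v, b, hb, by rw [mul_assoc]⟩
      | zero => simp
      | add y z hy hz hy' hz' =>
        have hsum := Submodule.add_mem (relSub k A P ΔR) hy' hz'
        simpa [map_add, add_mul, tmul_add, add_sub_add_comm] using hsum
      | smul r y hy hy' =>
        have hsm := Submodule.smul_mem (relSub k A P ΔR) r hy'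
        simpa [map_smul, smul_sub, tmul_smul, smul_mul_assoc] using hsm
    have h := key x hxBB
    rw [LinearMap.mem_ker.mp hxmul, zero_mul, tmul_zero, sub_zero] at h
    exact h
  -- hence ker χ = relSub
  have hkerχ : LinearMap.ker (chiMap k A P ΔR) = relSub k A P ΔR := by
    refine le_antisymm ?_ hrel_le
    intro t ht
    refine hPB2P_le ?_
    rw [← hexact]
    exact Submodule.mem_inf.mpr ⟨ht, LinearMap.mem_ker.mpr (hker_mul t (LinearMap.mem_ker.mp ht))⟩
  -- flatness: exactness after tensoring with A
  have hex2 : Function.Exact ((relSub k A P ΔR).subtype.lTensor A)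
      ((chiMap k A P ΔR).lTensor A) := by
    apply Module.Flat.lTensor_exact A
    rw [LinearMap.exact_iff, hkerχ, Submodule.range_subtype]
  rw [LinearMap.exact_iff] at hex2
  -- the key identity
  have hKI : ∀ t : P ⊗[k] P,
      (chiMap k A P ΔR).lTensor A ((TensorProduct.assoc k A P P)
        (TensorProduct.map ((TensorProduct.comm k P A).toLinearMap ∘ₗ ΔR) LinearMap.id t))
      = psiMap k A P ΔR (chiMap k A P ΔR t) := by
    intro t
    induction t using TensorProduct.induction_on with
    | zero => simp
    | add x y hx hy => simp only [map_add, hx, hy]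
    | tmul u v =>
      simp only [map_tmul, LinearMap.comp_apply, LinearEquiv.coe_coe, LinearMap.id_coe, id_eq]
      rw [hχtmul]
      have hL : ∀ X : P ⊗[k] A,
          (chiMap k A P ΔR).lTensor A ((TensorProduct.assoc k A P P)
            ((TensorProduct.comm k P A) X ⊗ₜ v)) = nMap k A P (X ⊗ₜ ΔR v) := by
        intro X
        induction X using TensorProduct.induction_on with
        | zero => simp
        | add x y hx hy => simp only [map_add, add_tmul, hx, hy]
        | tmul p b =>
          rw [comm_tmul, assoc_tmul, LinearMap.lTensor_tmul, hχtmul]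
          induction ΔR v using TensorProduct.induction_on with
          | zero => simp
          | add x y hx hy => simp only [map_add, tmul_add, hx, hy]
          | tmul q c => rw [nMap_tmul]; simp
      rw [hL]
      have hR : psiMap k A P ΔR (TensorProduct.map (LinearMap.mulLeft k u) LinearMap.id (ΔR v))
          = bigPsi k A P (ΔR u ⊗ₜ ΔR v) := by
        have h1 : ∀ Y : P ⊗[k] A,
            psiMap k A P ΔR (TensorProduct.map (LinearMap.mulLeft k u) LinearMap.id Y)
            = TensorProduct.map (LinearMap.mul' k A) LinearMap.id
                ((TensorProduct.tensorTensorTensorComm k A P A A)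
                  (TensorProduct.map
                    (((TensorProduct.comm k P A).toLinearMap ∘ₗ
                        LinearMap.mulLeft k (ΔR u)) ∘ₗ ΔR)
                    ((TensorProduct.map (HopfAlgebra.antipode (R := k)) LinearMap.id) ∘ₗ
                      Coalgebra.comul) Y)) := by
          intro Y
          induction Y using TensorProduct.induction_on with
          | zero => simp
          | add x y hx hy => simp only [map_add, hx, hy]
          | tmul q c =>
            simp only [psiMap, map_tmul, LinearMap.comp_apply, LinearMap.mulLeft_apply,
              LinearEquiv.coe_coe, LinearMap.id_coe, id_eq]
            rw [hmul]
        rw [h1, TensorProduct.map_comp, LinearMap.comp_apply]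
        have h3 : TensorProduct.map ΔR (Coalgebra.comul (R := k)) (ΔR v)
            = TensorProduct.map LinearMap.id Coalgebra.comul
                (TensorProduct.map ΔR LinearMap.id (ΔR v)) := by
          conv_rhs => rw [← LinearMap.comp_apply, ← TensorProduct.map_comp,
            LinearMap.id_comp, LinearMap.comp_id]
        rw [h3, hcoassoc v]
        have h5 : TensorProduct.map LinearMap.id Coalgebra.comul
            ((TensorProduct.assoc k P A A).symm
              (TensorProduct.map LinearMap.id Coalgebra.comul (ΔR v)))
            = vMap k A P (ΔR v) := by
          simp [vMap]
        rw [h5]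
        have h6 : ∀ V : (P ⊗[k] A) ⊗[k] (A ⊗[k] A),
            TensorProduct.map ((TensorProduct.comm k P A).toLinearMap ∘ₗ
                LinearMap.mulLeft k (ΔR u))
              (TensorProduct.map (HopfAlgebra.antipode (R := k)) LinearMap.id) V
            = TensorProduct.map ((TensorProduct.comm k P A).toLinearMap ∘ₗ
                  LinearMap.mul' k (P ⊗[k] A))
                (TensorProduct.map (HopfAlgebra.antipode (R := k)) LinearMap.id)
              ((TensorProduct.assoc k (P ⊗[k] A) (P ⊗[k] A) (A ⊗[k] A)).symm
                (ΔR u ⊗ₜ V)) := by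
          intro V
          induction V using TensorProduct.induction_on with
          | zero => simp
          | add x y hx hy => simp only [map_add, tmul_add, hx, hy]
          | tmul W d => simp [LinearMap.mul'_apply]
        rw [h6]
        simp [bigPsi, LinearMap.comp_apply, LinearMap.lTensor_tmul]
      rw [hR, bigPsi_eq_nMap]
  -- ψ at 1 ⊗ a
  have hψ1 : psiMap k A P ΔR ((1 : P) ⊗ₜ a)
      = TensorProduct.map (HopfAlgebra.antipode (R := k)) (TensorProduct.mk k P A 1)
          (Coalgebra.comul a) := by
    simp only [psiMap, LinearMap.comp_apply, map_tmul, LinearEquiv.coe_coe]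
    rw [hone, Algebra.TensorProduct.one_def, comm_tmul]
    induction Coalgebra.comul (R := k) a using TensorProduct.induction_on with
    | zero => simp
    | add x y hx hy => simp only [map_add, tmul_add, hx, hy]
    | tmul a₁ a₂ => simp
  -- right-hand side under lTensor χ
  have hR1 : ∀ c : A ⊗[k] A, (chiMap k A P ΔR).lTensor A
      (TensorProduct.map (HopfAlgebra.antipode (R := k)) σ c)
      = TensorProduct.map (HopfAlgebra.antipode (R := k)) (TensorProduct.mk k P A 1) c := by
    intro c
    induction c using TensorProduct.induction_on with
    | zero => simp
    | add x y hx hy => simp only [map_add, hx, hy]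
    | tmul a₁ a₂ => rw [map_tmul, LinearMap.lTensor_tmul, hσ, map_tmul]; rfl
  rw [← hex2, LinearMap.mem_ker, map_sub, hKI (σ a), hσ a, hψ1, hR1, sub_self]
end
end

section
/- Let τ be the translation map of a quantum principal bundle P(B,A), with tensor coaction Δ_R^⊗ on P ⊗_B P and adjoint coaction Ad(a) = a₂ ⊗ S(a₁)a₃ on A. Then Δ_R^⊗ ∘ τ = (τ ⊗ id) ∘ Ad. -/
open TensorProduct

noncomputable section

variable (k : Type*) [Field k]

variable (A P : Type*) [Ring A] [HopfAlgebra k A] [Ring P] [Algebra k P]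

section Aux

namespace QPB

open Coalgebra HopfAlgebra LinearMap TensorProduct

variable (k : Type*) [Field k] (A P : Type*) [Ring A] [HopfAlgebra k A] [Ring P] [Algebra k P]

/-- iterated comultiplication `a ↦ a₁ ⊗ (a₂ ⊗ a₃)`. -/
def comul3 : A →ₗ[k] A ⊗[k] (A ⊗[k] A) :=
  TensorProduct.map LinearMap.id Coalgebra.comul ∘ₗ Coalgebra.comul

/-- `a₁ ⊗ (a₂ ⊗ a₃) ↦ a₂ ⊗ S(a₁) a₃`. -/
def rhoMap : A ⊗[k] (A ⊗[k] A) →ₗ[k] A ⊗[k] A :=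
  TensorProduct.map LinearMap.id (LinearMap.mul' k A) ∘ₗ
    (TensorProduct.leftComm k A A A).toLinearMap ∘ₗ
    TensorProduct.map (HopfAlgebra.antipode (R := k)) LinearMap.id

lemma ad_comp : adCoaction k A = rhoMap k A ∘ₗ comul3 k A :=
  LinearMap.ext fun _ => rfl

lemma ad_apply (a : A) : rhoMap k A (comul3 k A a) = adCoaction k A a := rfl

def muMap : (P ⊗[k] A) ⊗[k] (A ⊗[k] A) →ₗ[k] (P ⊗[k] A) ⊗[k] A :=
  LinearMap.lTensor (P ⊗[k] A) (LinearMap.mul' k A) ∘ₗ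
    (TensorProduct.tensorTensorTensorComm k P A A A).toLinearMap

lemma muMap_tmul (p : P) (a e f : A) :
    muMap k A P ((p ⊗ₜ a) ⊗ₜ (e ⊗ₜ f)) = (p ⊗ₜ e) ⊗ₜ (a * f) := by
  simp [muMap]

def psiL : (P ⊗[k] A) ⊗[k] ((P ⊗[k] A) ⊗[k] A) →ₗ[k] (P ⊗[k] A) ⊗[k] A :=
  LinearMap.lTensor (P ⊗[k] A) (LinearMap.mul' k A) ∘ₗ
  (TensorProduct.assoc k (P ⊗[k] A) A A).toLinearMap ∘ₗ
  LinearMap.rTensor A (TensorProduct.assoc k P A A).symm.toLinearMap ∘ₗ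
  LinearMap.rTensor A (TensorProduct.map (LinearMap.mul' k P) (TensorProduct.comm k A A).toLinearMap) ∘ₗ
  LinearMap.rTensor A (TensorProduct.tensorTensorTensorComm k P A P A).toLinearMap ∘ₗ
  (TensorProduct.assoc k (P ⊗[k] A) (P ⊗[k] A) A).symm.toLinearMap

lemma psiL_tmul (p q : P) (a c b : A) :
    psiL k A P ((p ⊗ₜ a) ⊗ₜ ((q ⊗ₜ c) ⊗ₜ b)) = ((p * q) ⊗ₜ c) ⊗ₜ (a * b) := by
  simp [psiL]

variable (ΔR : P →ₗ[k] P ⊗[k] A)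

def theta : P ⊗[k] ((P ⊗[k] A) ⊗[k] A) →ₗ[k] (P ⊗[k] A) ⊗[k] (A ⊗[k] (A ⊗[k] A)) :=
  TensorProduct.map (LinearMap.mul' k (P ⊗[k] A)) (comul3 k A) ∘ₗ
  (TensorProduct.assoc k (P ⊗[k] A) (P ⊗[k] A) A).symm.toLinearMap ∘ₗ
  TensorProduct.map ΔR LinearMap.id

lemma theta_tmul (u : P) (z : P ⊗[k] A) (b : A) :
    theta k A P ΔR (u ⊗ₜ (z ⊗ₜ b)) = (ΔR u * z) ⊗ₜ comul3 k A b := by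
  simp [theta]

end QPB

end Aux

section Aux2

namespace QPB

open Coalgebra HopfAlgebra LinearMap TensorProduct

set_option synthInstance.maxHeartbeats 1000000
set_option maxHeartbeats 1000000

variable {k : Type*} [Field k] {A P : Type*} [Ring A] [HopfAlgebra k A] [Ring P] [Algebra k P]
variable (ΔR : P →ₗ[k] P ⊗[k] A)

lemma chi_tmul (u v : P) :
    chiMap k A P ΔR (u ⊗ₜ v)
      = TensorProduct.map (LinearMap.mul' k P) LinearMap.id
          ((TensorProduct.assoc k P P A).symm (u ⊗ₜ ΔR v)) := by
  simp [chiMap]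

lemma delta_tmul (u v : P) :
    deltaTens k A P ΔR (u ⊗ₜ v)
      = TensorProduct.map LinearMap.id (LinearMap.mul' k A)
          ((TensorProduct.tensorTensorTensorComm k P A P A) (ΔR u ⊗ₜ ΔR v)) := by
  simp [deltaTens]

lemma U1 (x y : P ⊗[k] A) :
    LinearMap.rTensor A (chiMap k A P ΔR)
        (TensorProduct.map LinearMap.id (LinearMap.mul' k A)
          ((TensorProduct.tensorTensorTensorComm k P A P A) (x ⊗ₜ y)))
      = psiL k A P (x ⊗ₜ TensorProduct.map ΔR LinearMap.id y) := by
  induction x using TensorProduct.induction_on with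
  | zero => simp
  | add x₁ x₂ h₁ h₂ => simp only [add_tmul, map_add]; rw [h₁, h₂]
  | tmul p a =>
    induction y using TensorProduct.induction_on with
    | zero => simp
    | add y₁ y₂ h₁ h₂ => simp only [tmul_add, map_add]; rw [h₁, h₂]
    | tmul q b =>
      have sub : ∀ z : P ⊗[k] A,
          (TensorProduct.map (LinearMap.mul' k P) LinearMap.id
            ((TensorProduct.assoc k P P A).symm (p ⊗ₜ z))) ⊗ₜ[k] (a * b)
          = psiL k A P ((p ⊗ₜ a) ⊗ₜ (z ⊗ₜ b)) := by
        intro z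
        induction z using TensorProduct.induction_on with
        | zero => simp
        | add z₁ z₂ h₁ h₂ =>
          simp only [tmul_add, add_tmul, map_add] at *
          rw [h₁, h₂]
        | tmul q' c => simp [psiL_tmul]
      simp only [TensorProduct.tensorTensorTensorComm_tmul, TensorProduct.map_tmul,
        LinearMap.id_coe, id_eq, LinearMap.mul'_apply, LinearMap.rTensor_tmul, chi_tmul]
      exact sub (ΔR q)

lemma U2 (hmul : ∀ u v : P, ΔR (u * v) = ΔR u * ΔR v) (u : P) (y : P ⊗[k] A) :
    TensorProduct.map ΔR (comul3 k A)
        (TensorProduct.map (LinearMap.mul' k P) LinearMap.id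
          ((TensorProduct.assoc k P P A).symm (u ⊗ₜ y)))
      = theta k A P ΔR (u ⊗ₜ TensorProduct.map ΔR LinearMap.id y) := by
  induction y using TensorProduct.induction_on with
  | zero => simp
  | add y₁ y₂ h₁ h₂ => simp only [tmul_add, map_add]; rw [h₁, h₂]
  | tmul q b =>
    simp only [TensorProduct.assoc_symm_tmul, TensorProduct.map_tmul, LinearMap.id_coe, id_eq,
      LinearMap.mul'_apply, hmul, theta_tmul]

end QPB

end Aux2

section Aux3

namespace QPB

open Coalgebra HopfAlgebra LinearMap TensorProduct

set_option synthInstance.maxHeartbeats 1000000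
set_option maxHeartbeats 1000000

variable {k : Type*} [Field k] {A P : Type*} [Ring A] [HopfAlgebra k A] [Ring P] [Algebra k P]

def hInner : A ⊗[k] A →ₗ[k] A ⊗[k] A :=
  LinearMap.lTensor A (LinearMap.mul' k A) ∘ₗ (TensorProduct.leftComm k A A A).toLinearMap ∘ₗ
    LinearMap.lTensor A (adCoaction k A)

lemma comul3_eq : comul3 k A = LinearMap.lTensor A Coalgebra.comul ∘ₗ Coalgebra.comul :=
  LinearMap.ext fun _ => rfl

/-- naturality of the associator -/
lemma assoc_nat (z : (A ⊗[k] A) ⊗[k] A) :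
    LinearMap.lTensor A (LinearMap.lTensor A (Coalgebra.comul (R := k)))
        ((TensorProduct.assoc k A A A) z)
      = (TensorProduct.assoc k A A (A ⊗[k] A))
          (LinearMap.lTensor (A ⊗[k] A) Coalgebra.comul z) := by
  induction z using TensorProduct.induction_on with
  | zero => simp
  | add z₁ z₂ h₁ h₂ => simp only [map_add]; rw [h₁, h₂]
  | tmul x c =>
    induction x using TensorProduct.induction_on with
    | zero => simp
    | add x₁ x₂ h₁ h₂ => simp only [add_tmul, map_add]; rw [h₁, h₂]
    | tmul x₁ x₂ => simp

lemma claim4 (e : A ⊗[k] A) :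
    LinearMap.lTensor A (LinearMap.mul' k A)
        ((TensorProduct.leftComm k A A A) ((1 : A) ⊗ₜ e)) = e := by
  induction e using TensorProduct.induction_on with
  | zero => simp
  | add e₁ e₂ h₁ h₂ => simp only [tmul_add, map_add]; rw [h₁, h₂]
  | tmul e₁ e₂ => simp

lemma claim2' (h e : A ⊗[k] A) :
    LinearMap.lTensor A (LinearMap.mul' k A)
        ((TensorProduct.leftComm k A A A)
          (LinearMap.lTensor A (rhoMap k A)
            ((TensorProduct.assoc k A A (A ⊗[k] A)) (h ⊗ₜ e))))
      = LinearMap.lTensor A (LinearMap.mul' k A)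
          ((TensorProduct.leftComm k A A A)
            ((LinearMap.mul' k A ((HopfAlgebra.antipode (R := k)).lTensor A h)) ⊗ₜ e)) := by
  induction h using TensorProduct.induction_on with
  | zero => simp
  | add h₁ h₂ ih₁ ih₂ => simp only [add_tmul, map_add]; rw [ih₁, ih₂]
  | tmul h₁ h₂ =>
    induction e using TensorProduct.induction_on with
    | zero => simp
    | add e₁ e₂ ih₁ ih₂ => simp only [tmul_add, map_add]; rw [ih₁, ih₂]
    | tmul e₁ e₂ =>
      simp [rhoMap, mul_assoc]

lemma claim3 (c : A ⊗[k] A) :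
    LinearMap.lTensor A (LinearMap.mul' k A)
        ((TensorProduct.leftComm k A A A)
          (LinearMap.lTensor A (rhoMap k A)
            ((TensorProduct.assoc k A A (A ⊗[k] A))
              (LinearMap.lTensor (A ⊗[k] A) Coalgebra.comul
                (LinearMap.rTensor A Coalgebra.comul c)))))
      = Coalgebra.comul ((TensorProduct.lid k A)
          (LinearMap.rTensor A Coalgebra.counit c)) := by
  induction c using TensorProduct.induction_on with
  | zero => simp
  | add c₁ c₂ ih₁ ih₂ => simp only [map_add]; rw [ih₁, ih₂]
  | tmul c₁ c₂ =>
    rw [LinearMap.rTensor_tmul, LinearMap.lTensor_tmul, claim2']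
    rw [HopfAlgebra.mul_antipode_lTensor_comul_apply, Algebra.algebraMap_eq_smul_one]
    rw [← smul_tmul', map_smul, map_smul, claim4]
    simp

lemma hMap_eq : hInner (k := k) (A := A) ∘ₗ Coalgebra.comul = Coalgebra.comul := by
  apply LinearMap.ext; intro b
  have h1 : LinearMap.lTensor A (adCoaction k A) (Coalgebra.comul b)
      = LinearMap.lTensor A (rhoMap k A)
          (LinearMap.lTensor A (LinearMap.lTensor A Coalgebra.comul)
            (LinearMap.lTensor A Coalgebra.comul (Coalgebra.comul b))) := by
    rw [ad_comp, LinearMap.lTensor_comp, LinearMap.comp_apply, comul3_eq,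
      LinearMap.lTensor_comp, LinearMap.comp_apply]
  have h2 : LinearMap.lTensor A (Coalgebra.comul (R := k)) (Coalgebra.comul b)
      = (TensorProduct.assoc k A A A)
          (LinearMap.rTensor A Coalgebra.comul (Coalgebra.comul b)) := by
    rw [Coalgebra.coassoc_apply]
  simp only [LinearMap.comp_apply, hInner, LinearEquiv.coe_coe]
  rw [h1, h2, assoc_nat, claim3]
  simp

end QPB

end Aux3

section Aux4

namespace QPB

open Coalgebra HopfAlgebra LinearMap TensorProduct

set_option synthInstance.maxHeartbeats 1000000
set_option maxHeartbeats 1000000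

variable {k : Type*} [Field k] {A P : Type*} [Ring A] [HopfAlgebra k A] [Ring P] [Algebra k P]
variable (ΔR : P →ₗ[k] P ⊗[k] A)

lemma U3sub (x : P ⊗[k] A) (q : P) (w₁ : A) (s : A ⊗[k] A) :
    muMap k A P ((x * (q ⊗ₜ w₁)) ⊗ₜ s)
      = psiL k A P (x ⊗ₜ (TensorProduct.assoc k P A A).symm
          (q ⊗ₜ (LinearMap.lTensor A (LinearMap.mul' k A)
            ((TensorProduct.leftComm k A A A) (w₁ ⊗ₜ s))))) := by
  induction x using TensorProduct.induction_on with
  | zero => simp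
  | add x₁ x₂ h₁ h₂ => simp only [add_mul, add_tmul, tmul_add, map_add]; rw [h₁, h₂]
  | tmul p a =>
    induction s using TensorProduct.induction_on with
    | zero => simp
    | add s₁ s₂ h₁ h₂ => simp only [tmul_add, map_add]; rw [h₁, h₂]
    | tmul e f =>
      rw [Algebra.TensorProduct.tmul_mul_tmul]
      simp [muMap_tmul, psiL_tmul, mul_assoc]

lemma U3 (u : P) (y : P ⊗[k] A) :
    muMap k A P (LinearMap.lTensor (P ⊗[k] A) (rhoMap k A)
        (theta k A P ΔR (u ⊗ₜ (TensorProduct.assoc k P A A).symm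
          (TensorProduct.map LinearMap.id Coalgebra.comul y))))
      = psiL k A P (ΔR u ⊗ₜ (TensorProduct.assoc k P A A).symm
          (TensorProduct.map LinearMap.id (hInner (k := k) (A := A) ∘ₗ Coalgebra.comul) y)) := by
  induction y using TensorProduct.induction_on with
  | zero => simp
  | add y₁ y₂ h₁ h₂ => simp only [tmul_add, map_add]; rw [h₁, h₂]
  | tmul q b =>
    rw [TensorProduct.map_tmul, TensorProduct.map_tmul]
    simp only [LinearMap.id_coe, id_eq, LinearMap.comp_apply]
    generalize Coalgebra.comul (R := k) b = w
    induction w using TensorProduct.induction_on with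
    | zero => simp [hInner]
    | add w₁ w₂ h₁ h₂ =>
      simp only [tmul_add, map_add, hInner, LinearMap.comp_apply, LinearEquiv.coe_coe] at *
      rw [h₁, h₂]
    | tmul w₁ w₂ =>
      rw [TensorProduct.assoc_symm_tmul, theta_tmul, LinearMap.lTensor_tmul, ad_apply]
      have : hInner (k := k) (A := A) (w₁ ⊗ₜ w₂)
          = LinearMap.lTensor A (LinearMap.mul' k A)
              ((TensorProduct.leftComm k A A A) (w₁ ⊗ₜ (adCoaction k A w₂))) := by
        simp [hInner]
      rw [this, U3sub]

lemma lemA (hcoassoc : ∀ u : P, TensorProduct.map ΔR LinearMap.id (ΔR u)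
      = (TensorProduct.assoc k P A A).symm (TensorProduct.map LinearMap.id Coalgebra.comul (ΔR u)))
    (hmul : ∀ u v : P, ΔR (u * v) = ΔR u * ΔR v) (x : P ⊗[k] P) :
    LinearMap.rTensor A (chiMap k A P ΔR) (deltaTens k A P ΔR x)
      = muMap k A P (LinearMap.lTensor (P ⊗[k] A) (rhoMap k A)
          (TensorProduct.map ΔR (comul3 k A) (chiMap k A P ΔR x))) := by
  induction x using TensorProduct.induction_on with
  | zero => simp
  | add x₁ x₂ h₁ h₂ => simp only [map_add]; rw [h₁, h₂]
  | tmul u v =>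
    rw [delta_tmul, U1, chi_tmul, U2 ΔR hmul, hcoassoc v, U3, hMap_eq]

lemma lemB (hone : ΔR 1 = 1)
    (σ : A →ₗ[k] P ⊗[k] P)
    (hσ : ∀ a : A, chiMap k A P ΔR (σ a) = (1 : P) ⊗ₜ a) (a : A) :
    LinearMap.rTensor A (chiMap k A P ΔR)
        (TensorProduct.map σ LinearMap.id (adCoaction k A a))
      = muMap k A P (LinearMap.lTensor (P ⊗[k] A) (rhoMap k A)
          (TensorProduct.map ΔR (comul3 k A) ((1 : P) ⊗ₜ a))) := by
  rw [TensorProduct.map_tmul, hone, Algebra.TensorProduct.one_def,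
    LinearMap.lTensor_tmul, ad_apply]
  generalize adCoaction k A a = t
  induction t using TensorProduct.induction_on with
  | zero => simp
  | add t₁ t₂ h₁ h₂ => simp only [tmul_add, map_add]; rw [h₁, h₂]
  | tmul e f =>
    rw [TensorProduct.map_tmul, LinearMap.rTensor_tmul, hσ e]
    simp [muMap]

lemma kerK1 (hcounit : ∀ u : P,
      TensorProduct.map LinearMap.id Coalgebra.counit (ΔR u) = u ⊗ₜ (1 : k))
    (x : P ⊗[k] P) :
    LinearMap.mul' k P x
      = (TensorProduct.rid k P)
          (TensorProduct.map LinearMap.id Coalgebra.counit (chiMap k A P ΔR x)) := by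
  induction x using TensorProduct.induction_on with
  | zero => simp
  | add x₁ x₂ h₁ h₂ => simp only [map_add]; rw [h₁, h₂]
  | tmul u v =>
    rw [chi_tmul]
    have sub : ∀ y : P ⊗[k] A,
        (TensorProduct.rid k P) (TensorProduct.map LinearMap.id Coalgebra.counit
          (TensorProduct.map (LinearMap.mul' k P) LinearMap.id
            ((TensorProduct.assoc k P P A).symm (u ⊗ₜ y))))
        = u * (TensorProduct.rid k P) (TensorProduct.map LinearMap.id Coalgebra.counit y) := by
      intro y
      induction y using TensorProduct.induction_on with
      | zero => simp
      | add y₁ y₂ h₁ h₂ => simp only [tmul_add, map_add]; rw [h₁, h₂, mul_add]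
      | tmul q b => simp [mul_smul_comm]
    rw [sub (ΔR v), hcounit v]
    simp

lemma kerK2 : PB2P k A P ΔR ≤ relSub k A P ΔR := by
  rw [PB2P]
  apply Submodule.span_le.2
  rintro w ⟨u, v, x, ⟨hxBB, hxker⟩, rfl⟩
  have main : ∀ x ∈ BBsub k A P ΔR,
      TensorProduct.map (LinearMap.mulLeft k u) (LinearMap.mulRight k v) x
        - (TensorProduct.mk k P P u) (LinearMap.mulRight k v (LinearMap.mul' k P x))
        ∈ relSub k A P ΔR := by
    intro x hx
    induction hx using Submodule.span_induction with
    | mem y hy =>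
      obtain ⟨b, c, hb, hc, rfl⟩ := hy
      refine Submodule.subset_span ⟨u, c * v, b, hb, ?_⟩
      simp [mul_assoc]
    | zero => simp
    | add y z hy hz ihy ihz =>
      simp only [map_add]
      rw [add_sub_add_comm]
      exact Submodule.add_mem _ ihy ihz
    | smul r y hy ihy =>
      simp only [map_smul]
      rw [← smul_sub]
      exact Submodule.smul_mem _ r ihy
  have h := main x hxBB
  rw [LinearMap.mem_ker.mp hxker] at h
  simpa using h

end QPB

end Aux4

/-- Proposition 3.5(3): `Δ_R^⊗ ∘ τ = (τ ⊗ id) ∘ Ad`.  Here `σ` is any linear lift of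
the translation map (`χ(σ(a)) = 1 ⊗ a`, `τ = mk ∘ σ`), and both sides are compared in
`(P ⊗ P) ⊗ A` modulo `relSub ⊗ A`, i.e. in `(P ⊗_B P) ⊗ A`. -/
theorem translation_map_adjoint_covariant
    (ΔR : P →ₗ[k] P ⊗[k] A)
    (hcounit : ∀ u : P, TensorProduct.map LinearMap.id Coalgebra.counit (ΔR u) = u ⊗ₜ (1 : k))
    (hcoassoc : ∀ u : P, TensorProduct.map ΔR LinearMap.id (ΔR u)
      = (TensorProduct.assoc k P A A).symm (TensorProduct.map LinearMap.id Coalgebra.comul (ΔR u)))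
    (hone : ΔR 1 = 1)
    (hmul : ∀ u v : P, ΔR (u * v) = ΔR u * ΔR v)
    (hfree : Function.Surjective (chiMap k A P ΔR))
    (hexact : LinearMap.ker (chiMap k A P ΔR) ⊓ LinearMap.ker (LinearMap.mul' k P)
      = PB2P k A P ΔR)
    (σ : A →ₗ[k] P ⊗[k] P)
    (hσ : ∀ a : A, chiMap k A P ΔR (σ a) = (1 : P) ⊗ₜ a) :
    ∀ a : A,
      Submodule.Quotient.mk
          (p := LinearMap.range ((relSub k A P ΔR).subtype.rTensor A))
          (deltaTens k A P ΔR (σ a))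
        = Submodule.Quotient.mk
          (TensorProduct.map σ LinearMap.id (adCoaction k A a)) := by
  intro a
  rw [Submodule.Quotient.eq]
  have hker : LinearMap.ker (chiMap k A P ΔR) ≤ relSub k A P ΔR := by
    intro x hx
    have h0 : chiMap k A P ΔR x = 0 := hx
    have hm : x ∈ LinearMap.ker (LinearMap.mul' k P) := by
      rw [LinearMap.mem_ker, QPB.kerK1 ΔR hcounit x, h0]
      simp
    have hmem : x ∈ LinearMap.ker (chiMap k A P ΔR) ⊓ LinearMap.ker (LinearMap.mul' k P) :=
      ⟨hx, hm⟩
    rw [hexact] at hmem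
    exact QPB.kerK2 ΔR hmem
  have hzero : LinearMap.rTensor A (chiMap k A P ΔR)
      (deltaTens k A P ΔR (σ a)
        - TensorProduct.map σ LinearMap.id (adCoaction k A a)) = 0 := by
    rw [map_sub, QPB.lemA ΔR hcoassoc hmul, hσ a, QPB.lemB ΔR hone σ hσ a, sub_self]
  have hex : Function.Exact
      ((LinearMap.ker (chiMap k A P ΔR)).subtype.rTensor A)
      ((chiMap k A P ΔR).rTensor A) :=
    Module.Flat.rTensor_exact (M := A) (LinearMap.exact_subtype_ker_map _)
  obtain ⟨t, ht⟩ := (hex _).mp hzero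
  refine LinearMap.mem_range.mpr ⟨(Submodule.inclusion hker).rTensor A t, ?_⟩
  rw [← LinearMap.comp_apply, ← LinearMap.rTensor_comp,
    Submodule.subtype_comp_inclusion]
  exact ht
end
end

section
/- Let P(B,A) be a quantum principal bundle. The image of Δ_R : P → P ⊗ A equals the fixed point subalgebra E = {x ∈ P ⊗ A : Δ_E(x) = x ⊗ 1}, where Δ_E(u ⊗ a) = u⁽¹⁾ ⊗ a₂ ⊗ u⁽²⁾S(a₁), and Δ_R : P → E is an algebra isomorphism. -/
open TensorProduct Coalgebra HopfAlgebra

set_option synthInstance.maxHeartbeats 400000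
set_option maxHeartbeats 1000000
noncomputable section

variable (k : Type*) [Field k]

variable (A P : Type*) [Ring A] [HopfAlgebra k A] [Ring P] [Algebra k P]

/-- The coaction `a ↦ a₂ ⊗ S(a₁)` of `A` on itself, i.e. `(id ⊗ S) ∘ Δ'`. -/
def rhoOp : A →ₗ[k] A ⊗[k] A :=
  (HopfAlgebra.antipode (R := k) (A := A)).lTensor A ∘ₗ
    (TensorProduct.comm k A A).toLinearMap ∘ₗ Coalgebra.comul

/-- The coaction `Δ_E(u ⊗ a) = u⁽¹⁾ ⊗ a₂ ⊗ u⁽²⁾ S(a₁)` on `P ⊗ A`. -/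
def deltaEA (ΔR : P →ₗ[k] P ⊗[k] A) : P ⊗[k] A →ₗ[k] (P ⊗[k] A) ⊗[k] A :=
  TensorProduct.map LinearMap.id (LinearMap.mul' k A) ∘ₗ
    (TensorProduct.tensorTensorTensorComm k P A A A).toLinearMap ∘ₗ
    TensorProduct.map ΔR (rhoOp k A)

lemma rhoOp_conv (a : A) :
    (LinearMap.mul' k A).lTensor A
      ((TensorProduct.leftComm k A A A) ((rhoOp k A).lTensor A (Coalgebra.comul a)))
    = a ⊗ₜ[k] (1 : A) := by
  have hstruct :
    ((LinearMap.mul' k A).lTensor A ∘ₗ (TensorProduct.leftComm k A A A).toLinearMap ∘ₗ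
      ((HopfAlgebra.antipode (R := k) (A := A)).lTensor A).lTensor A ∘ₗ
      ((TensorProduct.comm k A A).toLinearMap).lTensor A ∘ₗ
      (TensorProduct.assoc k A A A).toLinearMap :
      (A ⊗[k] A) ⊗[k] A →ₗ[k] A ⊗[k] A)
    = (TensorProduct.comm k A A).toLinearMap ∘ₗ
      (LinearMap.mul' k A ∘ₗ (HopfAlgebra.antipode (R := k) (A := A)).lTensor A).rTensor A := by
    ext x y z
    simp
  have h1 : (rhoOp k A).lTensor A (Coalgebra.comul a)
      = ((HopfAlgebra.antipode (R := k) (A := A)).lTensor A).lTensor A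
          (((TensorProduct.comm k A A).toLinearMap).lTensor A
            ((TensorProduct.assoc k A A A)
              ((Coalgebra.comul (R := k) (A := A)).rTensor A (Coalgebra.comul a)))) := by
    rw [coassoc_apply]
    simp [rhoOp, LinearMap.lTensor_comp, LinearMap.comp_apply]
  rw [h1]
  have := LinearMap.congr_fun hstruct
    ((Coalgebra.comul (R := k) (A := A)).rTensor A (Coalgebra.comul a))
  simp only [LinearMap.comp_apply, LinearEquiv.coe_coe] at this
  rw [this, ← LinearMap.comp_apply, ← LinearMap.rTensor_comp]
  have hh : (LinearMap.mul' k A ∘ₗ (HopfAlgebra.antipode (R := k) (A := A)).lTensor A) ∘ₗ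
      (Coalgebra.comul (R := k) (A := A))
      = Algebra.linearMap k A ∘ₗ Coalgebra.counit := by
    rw [LinearMap.comp_assoc]; exact HopfAlgebra.mul_antipode_lTensor_comul
  rw [hh, LinearMap.rTensor_comp, LinearMap.comp_apply, Coalgebra.rTensor_counit_comul]
  simp

-- structural lemma for forward direction (F1b)
lemma F1b (p : P) (c : A) (w : A ⊗[k] A) :
    TensorProduct.map LinearMap.id (LinearMap.mul' k A)
      ((TensorProduct.tensorTensorTensorComm k P A A A) ((p ⊗ₜ[k] c) ⊗ₜ[k] w))
    = (TensorProduct.assoc k P A A).symm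
        (p ⊗ₜ[k] ((LinearMap.mul' k A).lTensor A ((TensorProduct.leftComm k A A A) (c ⊗ₜ[k] w)))) := by
  induction w using TensorProduct.induction_on with
  | zero => simp
  | tmul e f => simp
  | add x y hx hy => simp [tmul_add, map_add, hx, hy]

lemma F1a (p : P) (z : A ⊗[k] A) :
    TensorProduct.map LinearMap.id (LinearMap.mul' k A)
      ((TensorProduct.tensorTensorTensorComm k P A A A)
        (TensorProduct.map LinearMap.id (rhoOp k A)
          ((TensorProduct.assoc k P A A).symm (p ⊗ₜ[k] z))))
    = (TensorProduct.assoc k P A A).symm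
        (p ⊗ₜ[k] ((LinearMap.mul' k A).lTensor A
          ((TensorProduct.leftComm k A A A) ((rhoOp k A).lTensor A z)))) := by
  induction z using TensorProduct.induction_on with
  | zero => simp
  | tmul c d =>
      have : (TensorProduct.assoc k P A A).symm (p ⊗ₜ[k] (c ⊗ₜ[k] d)) = (p ⊗ₜ[k] c) ⊗ₜ[k] d := by
        simp
      rw [this]
      simpa using F1b k A P p c (rhoOp k A d)
  | add x y hx hy => simp [tmul_add, map_add, hx, hy]

lemma F1 (y : P ⊗[k] A) :
    TensorProduct.map LinearMap.id (LinearMap.mul' k A)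
      ((TensorProduct.tensorTensorTensorComm k P A A A)
        (TensorProduct.map LinearMap.id (rhoOp k A)
          ((TensorProduct.assoc k P A A).symm
            (TensorProduct.map LinearMap.id Coalgebra.comul y))))
    = y ⊗ₜ[k] (1 : A) := by
  induction y using TensorProduct.induction_on with
  | zero => simp
  | tmul p a =>
      have h : TensorProduct.map (LinearMap.id : P →ₗ[k] P) Coalgebra.comul (p ⊗ₜ[k] a)
          = p ⊗ₜ[k] Coalgebra.comul a := by simp
      rw [h, F1a k A P, rhoOp_conv k A]
      simp
  | add x y hx hy => simp [map_add, add_tmul, hx, hy]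

/-- The map `(P ⊗ A) ⊗ A → P ⊗ A`, `(u ⊗ a) ⊗ b ↦ u ⊗ b a`. -/
def Fmap : (P ⊗[k] A) ⊗[k] A →ₗ[k] P ⊗[k] A :=
  (LinearMap.mul' k A ∘ₗ (TensorProduct.comm k A A).toLinearMap).lTensor P ∘ₗ
    (TensorProduct.assoc k P A A).toLinearMap

lemma R1 (x : P ⊗[k] A) : Fmap k A P (x ⊗ₜ[k] (1 : A)) = x := by
  induction x using TensorProduct.induction_on with
  | zero => simp [Fmap]
  | tmul u a => simp [Fmap]
  | add x y hx hy => simp [Fmap, add_tmul, map_add] at hx hy ⊢; rw [hx, hy]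

lemma R2c (p : P) (b : A) (z : A ⊗[k] A) :
    Fmap k A P (TensorProduct.map LinearMap.id (LinearMap.mul' k A)
      ((TensorProduct.tensorTensorTensorComm k P A A A)
        ((p ⊗ₜ[k] b) ⊗ₜ[k]
          ((HopfAlgebra.antipode (R := k) (A := A)).lTensor A ((TensorProduct.comm k A A) z)))))
    = p ⊗ₜ[k] (b * LinearMap.mul' k A ((HopfAlgebra.antipode (R := k) (A := A)).rTensor A z)) := by
  induction z using TensorProduct.induction_on with
  | zero => simp [Fmap]
  | tmul c d => simp [Fmap, mul_assoc]
  | add x y hx hy => simp [map_add, tmul_add, mul_add, hx, hy]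

lemma R2b (p : P) (b : A) (a : A) :
    Fmap k A P (TensorProduct.map LinearMap.id (LinearMap.mul' k A)
      ((TensorProduct.tensorTensorTensorComm k P A A A)
        ((p ⊗ₜ[k] b) ⊗ₜ[k] rhoOp k A a)))
    = (Coalgebra.counit (R := k) a : k) • (p ⊗ₜ[k] b) := by
  have h : rhoOp k A a = (HopfAlgebra.antipode (R := k) (A := A)).lTensor A
      ((TensorProduct.comm k A A) (Coalgebra.comul a)) := by
    simp [rhoOp]
  rw [h, R2c, HopfAlgebra.mul_antipode_rTensor_comul_apply]
  rw [← Algebra.commutes, ← Algebra.smul_def, tmul_smul]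

lemma R2a (y : P ⊗[k] A) (a : A) :
    Fmap k A P (TensorProduct.map LinearMap.id (LinearMap.mul' k A)
      ((TensorProduct.tensorTensorTensorComm k P A A A) (y ⊗ₜ[k] rhoOp k A a)))
    = (Coalgebra.counit (R := k) a : k) • y := by
  induction y using TensorProduct.induction_on with
  | zero => simp
  | tmul p b => exact R2b k A P p b a
  | add x y hx hy => simp [add_tmul, map_add, hx, hy]

/-- Lemma 4.4: for a quantum principal bundle `P(B,A)`, the image of `Δ_R` equals the
fixed-point subalgebra `E = {x ∈ P ⊗ A : Δ_E x = x ⊗ 1}`, and `Δ_R : P → E` is an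
algebra isomorphism (it is injective, and an algebra map by hypothesis). -/
theorem principal_bundle_as_associated_bundle
    (ΔR : P →ₗ[k] P ⊗[k] A)
    (hcounit : ∀ u : P, TensorProduct.map LinearMap.id Coalgebra.counit (ΔR u) = u ⊗ₜ (1 : k))
    (hcoassoc : ∀ u : P, TensorProduct.map ΔR LinearMap.id (ΔR u)
      = (TensorProduct.assoc k P A A).symm (TensorProduct.map LinearMap.id Coalgebra.comul (ΔR u)))
    (hone : ΔR 1 = 1)
    (hmul : ∀ u v : P, ΔR (u * v) = ΔR u * ΔR v)
    (hfree : Function.Surjective (chiMap k A P ΔR))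
    (hexact : LinearMap.ker (chiMap k A P ΔR) ⊓ LinearMap.ker (LinearMap.mul' k P)
      = PB2P k A P ΔR) :
    (∀ x : P ⊗[k] A, deltaEA k A P ΔR x = x ⊗ₜ 1 ↔ x ∈ LinearMap.range ΔR) ∧
    Function.Injective ΔR := by
  have hinj : Function.Injective ΔR := by
    intro u v huv
    have h : (u ⊗ₜ[k] (1 : k) : P ⊗[k] k) = v ⊗ₜ[k] (1 : k) := by
      rw [← hcounit u, ← hcounit v, huv]
    have h2 := congrArg (TensorProduct.rid k P) h
    simpa using h2
  refine ⟨fun x => ⟨fun hx => ?_, ?_⟩, hinj⟩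
  · -- fixed point implies in range
    have R2 : ∀ y : P ⊗[k] A, Fmap k A P (deltaEA k A P ΔR y)
        = ΔR ((TensorProduct.rid k P)
            (TensorProduct.map LinearMap.id Coalgebra.counit y)) := by
      intro y
      induction y using TensorProduct.induction_on with
      | zero => simp
      | tmul u a =>
          have h1 : deltaEA k A P ΔR (u ⊗ₜ[k] a)
              = TensorProduct.map LinearMap.id (LinearMap.mul' k A)
                  ((TensorProduct.tensorTensorTensorComm k P A A A)
                    (ΔR u ⊗ₜ[k] rhoOp k A a)) := by
            simp [deltaEA]
          rw [h1, R2a k A P]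
          simp [TensorProduct.smul_tmul']
      | add x y hx hy => simp [map_add, hx, hy]
    have hxx : Fmap k A P (deltaEA k A P ΔR x) = x := by rw [hx]; exact R1 k A P x
    exact ⟨_, by rw [← R2 x, hxx]⟩
  · -- in range implies fixed point
    rintro ⟨u, rfl⟩
    have h1 : deltaEA k A P ΔR (ΔR u)
        = TensorProduct.map LinearMap.id (LinearMap.mul' k A)
            ((TensorProduct.tensorTensorTensorComm k P A A A)
              (TensorProduct.map LinearMap.id (rhoOp k A)
                (TensorProduct.map ΔR LinearMap.id (ΔR u)))) := by
      have hdec : TensorProduct.map ΔR (rhoOp k A)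
          = TensorProduct.map LinearMap.id (rhoOp k A) ∘ₗ
              TensorProduct.map ΔR LinearMap.id := by
        rw [← TensorProduct.map_comp]; simp
      simp [deltaEA, hdec]
    rw [h1, hcoassoc u]
    exact F1 k A P (ΔR u)
end
end
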